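/- arXiv:math/0102051 — 10 statements merged into one kernel-verified Lean document; each statement's English description precedes it below -/
import Mathlib

section
/- The number of unimodal permutations of {1,...,n} with no fixed points equals (2^(n-1) + (-1)^n)/3 for every n ≥ 1. -/
def G : ℕ → ℕ → ℕ
  | 0, _ => 1
  | m+1, d => G m (d-1) + if d = 2 then 0 else G m (d-2)

def Bd : ℕ → ℕ → ℕ
  | 0, _ => 0
  | m+1, d => if d ≤ 1 then 0 else if d = 2 then 2^m else Bd m (d-1) + Bd m (d-2)

lemma G_le_one (m : ℕ) : ∀ d ≤ 1, G m d = 2^m := by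
  induction m with
  | zero => intro d _; rfl
  | succ m ih =>
    intro d hd
    have h1 : d - 1 ≤ 1 := by omega
    have h2 : d - 2 ≤ 1 := by omega
    have : d ≠ 2 := by omega
    simp [G, this, ih _ h1, ih _ h2, pow_succ]; ring

lemma Bd_le_one (m : ℕ) : ∀ d ≤ 1, Bd m d = 0 := by
  cases m with
  | zero => intro d _; rfl
  | succ m => intro d hd; simp [Bd]; omega

lemma G_add_Bd (m : ℕ) : ∀ d, 2 ≤ d → G m d + Bd m d = 2^m := by
  induction m with
  | zero => intro d hd; simp [G, Bd]
  | succ m ih =>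
    intro d hd
    by_cases h2 : d = 2
    · subst h2
      simp [G, Bd, G_le_one m 1 le_rfl, pow_succ]; ring
    · have hd3 : 3 ≤ d := by omega
      have e1 : G (m+1) d = G m (d-1) + G m (d-2) := by simp [G, h2]
      have e2 : Bd (m+1) d = Bd m (d-1) + Bd m (d-2) := by
        have : ¬ d ≤ 1 := by omega
        simp [Bd, this, h2]
      rw [e1, e2]
      by_cases h3 : d = 3
      · subst h3
        have := ih 2 le_rfl
        have g1 : G m 1 = 2^m := G_le_one m 1 le_rfl
        have b1 : Bd m 1 = 0 := Bd_le_one m 1 le_rfl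
        simp only [show (3:ℕ)-1 = 2 from rfl, show (3:ℕ)-2 = 1 from rfl, g1, b1, pow_succ]
        omega
      · have i1 := ih (d-1) (by omega)
        have i2 := ih (d-2) (by omega)
        have : 2^(m+1) = 2^m + 2^m := by rw [pow_succ]; ring
        omega

lemma Bd_formula (m : ℕ) : ∀ d e, 2 ≤ d → m + 1 = d + e →
    3 * (Bd m d : ℤ) = 2^m + 2^e * (-1)^d := by
  induction m with
  | zero => intro d e hd he; omega
  | succ m ih =>
    intro d e hd he
    by_cases h2 : d = 2
    · subst h2
      have he0 : e = m := by omega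
      subst he0
      simp [Bd, pow_succ]; ring
    · have hd3 : 3 ≤ d := by omega
      have e2 : Bd (m+1) d = Bd m (d-1) + Bd m (d-2) := by
        have : ¬ d ≤ 1 := by omega
        simp [Bd, this, h2]
      by_cases h3 : d = 3
      · subst h3
        have hm : m = e + 1 := by omega
        subst hm
        have i1 := ih 2 e le_rfl (by omega)
        have b1 : Bd (e+1) 1 = 0 := Bd_le_one _ 1 le_rfl
        rw [e2]
        simp only [show (3:ℕ)-1 = 2 from rfl, show (3:ℕ)-2 = 1 from rfl, b1]
        push_cast
        push_cast at i1
        have hq : (2:ℤ)^(e+1) = 2 * 2^e := by rw [pow_succ]; ring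
        have hp : (2:ℤ)^(e+1+1) = 2 * (2 * 2^e) := by rw [pow_succ, hq]; ring
        rw [hp]
        rw [hq] at i1
        linarith [i1]
      · have hd1e : 2 ≤ d - 1 := by omega
        have hd2e : 2 ≤ d - 2 := by omega
        have he1 : m + 1 = (d-1) + e := by omega
        have he2 : m + 1 = (d-2) + (e+1) := by omega
        have i1 := ih (d-1) e hd1e he1
        have i2 := ih (d-2) (e+1) hd2e he2
        rw [e2]
        push_cast
        have hd1 : ((-1:ℤ))^(d-1) = -(-1:ℤ)^d := by
          have h : (-1:ℤ)^d = (-1)^(d-1) * (-1) := by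
            rw [← pow_succ]; congr 1; omega
          rw [h]; ring
        have hd2 : ((-1:ℤ))^(d-2) = (-1:ℤ)^d := by
          have h : (-1:ℤ)^d = (-1)^(d-2) * ((-1)*(-1)) := by
            rw [show ((-1:ℤ))*(-1) = (-1)^(2:ℕ) by norm_num, ← pow_add]; congr 1; omega
          rw [h]; ring
        rw [hd1] at i1
        rw [hd2] at i2
        have hp : (2:ℤ)^(m+1) = 2^m + 2^m := by rw [pow_succ]; ring
        have hp2 : (2:ℤ)^(e+1) = 2 * 2^e := by rw [pow_succ]; ring
        rw [hp2] at i2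
        rw [hp]
        linarith [i1, i2]

lemma G_diag (m : ℕ) : 3 * (G m (m+1) : ℤ) = 2^(m+1) + (-1)^m := by
  cases m with
  | zero => simp [G]
  | succ m =>
    have h1 := G_add_Bd (m+1) (m+2) (by omega)
    have h2 := Bd_formula (m+1) (m+2) 0 (by omega) (by omega)
    have hc : (G (m+1) (m+2) : ℤ) + (Bd (m+1) (m+2) : ℤ) = 2^(m+1) := by exact_mod_cast h1
    have hsign : ((-1:ℤ))^(m+2) = (-1:ℤ)^m := by rw [pow_add]; norm_num
    have hsign2 : ((-1:ℤ))^(m+1) = -(-1:ℤ)^m := by rw [pow_succ]; ring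
    rw [hsign] at h2
    have hp : (2:ℤ)^(m+1+1) = 2 * 2^(m+1) := by rw [pow_succ]; ring
    rw [hp, hsign2, show m+1+1 = m+2 from rfl]
    linarith [h2, hc]


/-- number of `false`s of `c` strictly below `v`. -/
def Rc {s : ℕ} (c : Fin s → Bool) (v : Fin s) : ℕ :=
  ∑ w, if w < v ∧ c w = false then 1 else 0

def Lc {s : ℕ} (c : Fin s → Bool) (v : Fin s) : ℕ :=
  ∑ w, if w < v ∧ c w = true then 1 else 0

def Tc {s : ℕ} (c : Fin s → Bool) : ℕ := ∑ w, if c w = true then 1 else 0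

def Fc {s : ℕ} (c : Fin s → Bool) : ℕ := ∑ w, if c w = false then 1 else 0

private lemma ite_le_ite {p q : Prop} [Decidable p] [Decidable q] (h : p → q) :
    (if p then (1:ℕ) else 0) ≤ if q then 1 else 0 := by
  split_ifs <;> simp_all

private lemma ite_ite_le {p q r : Prop} [Decidable p] [Decidable q] [Decidable r]
    (hpr : p → r) (hqr : q → r) (hpq : p → ¬ q) :
    (if p then (1:ℕ) else 0) + (if q then 1 else 0) ≤ if r then 1 else 0 := by
  split_ifs <;> simp_all

private lemma sum_succ_split {s : ℕ} (f : Fin s → ℕ) (v : Fin s) :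
    (∑ w, f w) + 1 = ∑ w, (f w + if w = v then 1 else 0) := by
  rw [Finset.sum_add_distrib]
  congr 1
  rw [Finset.sum_ite_eq' Finset.univ v (fun _ => (1:ℕ))]
  simp

lemma Tc_add_Fc {s : ℕ} (c : Fin s → Bool) : Tc c + Fc c = s := by
  unfold Tc Fc
  rw [← Finset.sum_add_distrib]
  have : ∀ w : Fin s, ((if c w = true then 1 else 0) + if c w = false then (1:ℕ) else 0) = 1 := by
    intro w; cases h : c w <;> simp [h]
  rw [Finset.sum_congr rfl (fun w _ => this w)]
  simp

lemma Lc_lt_Tc {s : ℕ} (c : Fin s → Bool) (v : Fin s) (hv : c v = true) :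
    Lc c v < Tc c := by
  have h : Lc c v + 1 ≤ Tc c := by
    unfold Lc Tc
    rw [sum_succ_split _ v]
    apply Finset.sum_le_sum
    intro u _
    exact ite_ite_le (fun h => h.2) (fun h => h ▸ hv) (fun h h2 => absurd (h2 ▸ h.1) (lt_irrefl v))
  omega

lemma Rc_lt_Fc {s : ℕ} (c : Fin s → Bool) (v : Fin s) (hv : c v = false) :
    Rc c v < Fc c := by
  have h : Rc c v + 1 ≤ Fc c := by
    unfold Rc Fc
    rw [sum_succ_split _ v]
    apply Finset.sum_le_sum
    intro u _
    exact ite_ite_le (fun h => h.2) (fun h => h ▸ hv) (fun h h2 => absurd (h2 ▸ h.1) (lt_irrefl v))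
  omega

lemma Lc_mono {s : ℕ} (c : Fin s → Bool) {v w : Fin s} (h : v ≤ w) :
    Lc c v ≤ Lc c w := by
  apply Finset.sum_le_sum
  intro u _
  exact ite_le_ite (fun h2 => ⟨lt_of_lt_of_le h2.1 h, h2.2⟩)

lemma Rc_mono {s : ℕ} (c : Fin s → Bool) {v w : Fin s} (h : v ≤ w) :
    Rc c v ≤ Rc c w := by
  apply Finset.sum_le_sum
  intro u _
  exact ite_le_ite (fun h2 => ⟨lt_of_lt_of_le h2.1 h, h2.2⟩)

lemma Lc_strict {s : ℕ} (c : Fin s → Bool) {v w : Fin s} (h : v < w) (hv : c v = true) :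
    Lc c v < Lc c w := by
  have h1 : Lc c v + 1 ≤ Lc c w := by
    unfold Lc
    rw [sum_succ_split _ v]
    apply Finset.sum_le_sum
    intro u _
    refine ite_ite_le (fun h2 => ⟨lt_trans h2.1 h, h2.2⟩) (fun h2 => h2 ▸ ⟨h, hv⟩)
      (fun h2 h3 => absurd (h3 ▸ h2.1) (lt_irrefl v))
  omega

lemma Rc_strict {s : ℕ} (c : Fin s → Bool) {v w : Fin s} (h : v < w) (hv : c v = false) :
    Rc c v < Rc c w := by
  have h1 : Rc c v + 1 ≤ Rc c w := by
    unfold Rc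
    rw [sum_succ_split _ v]
    apply Finset.sum_le_sum
    intro u _
    refine ite_ite_le (fun h2 => ⟨lt_trans h2.1 h, h2.2⟩) (fun h2 => h2 ▸ ⟨h, hv⟩)
      (fun h2 h3 => absurd (h3 ▸ h2.1) (lt_irrefl v))
  omega

lemma Lc_le_val {s : ℕ} (c : Fin s → Bool) (v : Fin s) : Lc c v ≤ v.val := by
  unfold Lc
  calc (∑ w, if w < v ∧ c w = true then (1:ℕ) else 0)
      ≤ ∑ w, if w < v then 1 else 0 := by
        apply Finset.sum_le_sum
        intro u _
        exact ite_le_ite (fun h => h.1)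
    _ = v.val := by
        rw [Finset.sum_boole]
        have : Finset.filter (fun w => w < v) Finset.univ = Finset.Iio v := by
          ext w; simp
        rw [this]
        exact_mod_cast Fin.card_Iio (b := v)

lemma Tc_le {s : ℕ} (c : Fin s → Bool) : Tc c ≤ s := by
  have := Tc_add_Fc c; omega

lemma Fc_pos_of_zero_false {s : ℕ} (c : Fin (s+1) → Bool) (h : c 0 = false) : 1 ≤ Fc c := by
  unfold Fc
  calc (1:ℕ) = if c 0 = false then 1 else 0 := by simp [h]
    _ ≤ _ := Finset.single_le_sum (f := fun w => if c w = false then (1:ℕ) else 0)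
        (fun _ _ => by positivity) (Finset.mem_univ 0)

lemma Lc_lt_val {s : ℕ} (c : Fin (s+1) → Bool) (v : Fin (s+1)) (h0 : c 0 = false)
    (hv : c v = true) : Lc c v < v.val := by
  have hne : v ≠ 0 := by intro h; rw [h, h0] at hv; exact Bool.noConfusion hv
  have hpos : (0 : Fin (s+1)) < v := Fin.pos_of_ne_zero hne
  have h1 : Lc c v ≤ v.val - 1 := by
    unfold Lc
    calc (∑ w, if w < v ∧ c w = true then (1:ℕ) else 0)
        ≤ ∑ w, if w < v ∧ w ≠ 0 then 1 else 0 := by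
          apply Finset.sum_le_sum
          intro u _
          refine ite_le_ite (fun h2 => ⟨h2.1, fun h => ?_⟩)
          rw [h, h0] at h2; exact Bool.noConfusion h2.2
      _ = v.val - 1 := by
          rw [Finset.sum_boole]
          have : Finset.filter (fun w => w < v ∧ w ≠ 0) Finset.univ =
              (Finset.Iio v).erase 0 := by
            ext w; simp [and_comm]
          rw [this]
          norm_cast
          rw [Finset.card_erase_of_mem (by simp [hpos])]
          rw [Fin.card_Iio]
  omega

def Mcond (s : ℕ) (k : ℤ) (c : Fin s → Bool) : Prop :=
  ∀ v, c v = false → ((v : ℕ) : ℤ) + (Rc c v : ℤ) ≠ k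

lemma Rc_zero {s : ℕ} (c : Fin (s+1) → Bool) : Rc c 0 = 0 := by
  unfold Rc
  apply Finset.sum_eq_zero
  intro w _
  simp [Fin.not_lt_zero]

lemma Rc_succ {s : ℕ} (c : Fin (s+1) → Bool) (v : Fin s) :
    Rc c v.succ = (if c 0 = false then 1 else 0) + Rc (c ∘ Fin.succ) v := by
  unfold Rc
  rw [Fin.sum_univ_succ]
  congr 1
  · simp [Fin.succ_pos]
  · apply Finset.sum_congr rfl
    intro w _
    simp [Fin.succ_lt_succ_iff]

lemma Mcond_succ_iff {s : ℕ} (k : ℤ) (c : Fin (s+1) → Bool) :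
    Mcond (s+1) k c ↔
      ((c 0 = false → k ≠ 0) ∧
        Mcond s (k - (if c 0 = false then 2 else 1)) (c ∘ Fin.succ)) := by
  unfold Mcond
  rw [Fin.forall_fin_succ]
  constructor
  · rintro ⟨h0, hs⟩
    refine ⟨?_, ?_⟩
    · intro hc0 hk
      exact h0 hc0 (by simp [Rc_zero, hk])
    · intro v hv
      have := hs v hv
      rw [Rc_succ] at this
      intro hEq
      apply this
      push_cast [Fin.val_succ]
      by_cases h : c 0 = false <;> simp [h] at hEq ⊢ <;> push_cast at hEq ⊢ <;> linarith
  · rintro ⟨h0, hs⟩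
    refine ⟨?_, ?_⟩
    · intro hc0
      simp [Rc_zero]
      exact fun h => h0 hc0 h.symm
    · intro v hv
      have := hs v hv
      rw [Rc_succ]
      intro hEq
      apply this
      push_cast [Fin.val_succ] at hEq
      by_cases h : c 0 = false <;> simp [h] at hEq ⊢ <;> push_cast at hEq ⊢ <;> linarith

instance McondUnique (k : ℤ) : Unique {c : Fin 0 → Bool // Mcond 0 k c} := by
  refine ⟨⟨⟨fun v => v.elim0, fun v => v.elim0⟩⟩, ?_⟩
  rintro ⟨c, hc⟩
  ext v
  exact v.elim0

noncomputable def Mequiv (s : ℕ) (k : ℤ) :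
    {c : Fin (s+1) → Bool // Mcond (s+1) k c} ≃
      {c : Fin s → Bool // Mcond s (k-1) c} ⊕ {c : Fin s → Bool // k ≠ 0 ∧ Mcond s (k-2) c} := by
  classical
  refine
    { toFun := fun x =>
        if h : x.1 0 = false then
          Sum.inr ⟨x.1 ∘ Fin.succ, ?_, ?_⟩
        else Sum.inl ⟨x.1 ∘ Fin.succ, ?_⟩
      invFun := fun y =>
        match y with
        | Sum.inl z => ⟨Fin.cons true z.1, ?_⟩
        | Sum.inr z => ⟨Fin.cons false z.1, ?_⟩
      left_inv := ?_
      right_inv := ?_ }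
  · exact ((Mcond_succ_iff k x.1).1 x.2).1 h
  · have := ((Mcond_succ_iff k x.1).1 x.2).2
    simpa [h] using this
  · have := ((Mcond_succ_iff k x.1).1 x.2).2
    simpa [h] using this
  · rw [Mcond_succ_iff]
    constructor
    · simp
    · simpa using z.2
  · rw [Mcond_succ_iff]
    constructor
    · simp; exact z.2.1
    · simpa using z.2.2
  · rintro ⟨c, hc⟩
    by_cases h : c 0 = false <;> simp [h] <;> ext v <;>
      refine Fin.cases ?_ (fun w => ?_) v <;> simp [h]
  · rintro (z|z) <;> simp <;> first
      | rfl
      | (ext w; simp)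
      | (apply Subtype.ext; funext w; simp)

lemma cardM : ∀ s k, Nat.card {c : Fin s → Bool // Mcond s k c} = G s (k+2).toNat := by
  intro s
  induction s with
  | zero => intro k; simp [Nat.card_unique, G]
  | succ s ih =>
    intro k
    rw [Nat.card_congr (Mequiv s k), Nat.card_sum, ih (k-1)]
    have hG : G (s+1) (k+2).toNat = G s ((k+2).toNat - 1) + if (k+2).toNat = 2 then 0
        else G s ((k+2).toNat - 2) := rfl
    by_cases hk : k = 0
    · subst hk
      have : IsEmpty {c : Fin s → Bool // (0:ℤ) ≠ 0 ∧ Mcond s (0-2) c} := by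
        constructor; rintro ⟨c, h, _⟩; exact h rfl
      rw [Nat.card_of_isEmpty, hG]
      norm_num [Int.toNat]
    · have hEq : {c : Fin s → Bool // k ≠ 0 ∧ Mcond s (k-2) c} ≃
          {c : Fin s → Bool // Mcond s (k-2) c} := by
        apply Equiv.subtypeEquivRight
        intro c; simp [hk]
      rw [Nat.card_congr hEq, ih (k-2), hG]
      have h1 : (k - 1 + 2).toNat = (k+2).toNat - 1 := by omega
      have h2 : (k - 2 + 2).toNat = (k+2).toNat - 2 := by omega
      have h3 : (k+2).toNat = 2 ↔ k = 0 := by omega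
      rw [h1, h2]
      simp [h3, hk]


/-- A permutation of `Fin n` is unimodal if it strictly increases up to some
position `m` and strictly decreases afterwards. -/
def Unimodal {n : ℕ} (σ : Equiv.Perm (Fin n)) : Prop :=
  ∃ m : Fin n, StrictMonoOn σ {i | i ≤ m} ∧ StrictAntiOn σ {i | m ≤ i}


variable {m : ℕ}

def posFun (c : Fin (m+1) → Bool) : Fin (m+2) → Fin (m+2) := fun v =>
  Fin.lastCases ⟨Tc c, by have := Tc_le c; omega⟩
    (fun v' => if c v' then ⟨Lc c v', by have := Lc_le_val c v'; have := v'.isLt; omega⟩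
      else ⟨m+1 - Rc c v', by omega⟩) v

lemma pos_last (c : Fin (m+1) → Bool) : (posFun c (Fin.last (m+1))).val = Tc c := by
  simp [posFun]

lemma pos_true (c : Fin (m+1) → Bool) {v' : Fin (m+1)} (h : c v' = true) :
    (posFun c v'.castSucc).val = Lc c v' := by
  simp [posFun, h]

lemma pos_false (c : Fin (m+1) → Bool) {v' : Fin (m+1)} (h : c v' = false) :
    (posFun c v'.castSucc).val = m + 1 - Rc c v' := by
  simp [posFun, h]

lemma Rc_le_m {c : Fin (m+1) → Bool} {v' : Fin (m+1)} (h : c v' = false) : Rc c v' + 1 ≤ m + 1 := by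
  have h1 := Rc_lt_Fc c v' h
  have h2 := Tc_add_Fc c
  omega

lemma pos_false_gt (c : Fin (m+1) → Bool) {v' : Fin (m+1)} (h : c v' = false) :
    Tc c < (posFun c v'.castSucc).val := by
  rw [pos_false c h]
  have h1 := Rc_lt_Fc c v' h
  have h2 := Tc_add_Fc c
  omega

lemma lt_peak_shape (c : Fin (m+1) → Bool) (x : Fin (m+2))
    (h : (posFun c x).val < Tc c) : ∃ v', x = v'.castSucc ∧ c v' = true := by
  induction x using Fin.lastCases with
  | last => rw [pos_last] at h; omega
  | cast v' =>
    cases hc : c v' with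
    | true => exact ⟨v', rfl, hc⟩
    | false => have := pos_false_gt c hc; omega

lemma eq_peak_shape (c : Fin (m+1) → Bool) (x : Fin (m+2))
    (h : (posFun c x).val = Tc c) : x = Fin.last (m+1) := by
  induction x using Fin.lastCases with
  | last => rfl
  | cast v' =>
    exfalso
    cases hc : c v' with
    | true => rw [pos_true c hc] at h; have := Lc_lt_Tc c v' hc; omega
    | false => have := pos_false_gt c hc; omega

lemma gt_peak_shape (c : Fin (m+1) → Bool) (x : Fin (m+2))
    (h : Tc c < (posFun c x).val) : ∃ v', x = v'.castSucc ∧ c v' = false := by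
  induction x using Fin.lastCases with
  | last => rw [pos_last] at h; omega
  | cast v' =>
    cases hc : c v' with
    | true => rw [pos_true c hc] at h; have := Lc_lt_Tc c v' hc; omega
    | false => exact ⟨v', rfl, hc⟩

lemma posFun_inj (c : Fin (m+1) → Bool) : Function.Injective (posFun c) := by
  intro a b hab
  have hval := congrArg Fin.val hab
  induction a using Fin.lastCases with
  | last =>
    exact (eq_peak_shape c b (by rw [← hval, pos_last])).symm
  | cast a' =>
    induction b using Fin.lastCases with
    | last =>
      exact eq_peak_shape c a'.castSucc (by rw [hval, pos_last])
    | cast b' =>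
      cases hca : c a' with
      | true =>
        cases hcb : c b' with
        | true =>
          rw [pos_true c hca, pos_true c hcb] at hval
          rcases lt_trichotomy a' b' with h | h | h
          · exact absurd hval (Nat.ne_of_lt (Lc_strict c h hca))
          · rw [h]
          · exact absurd hval.symm (Nat.ne_of_lt (Lc_strict c h hcb))
        | false =>
          exfalso
          have h1 := Lc_lt_Tc c a' hca
          have h2 := pos_false_gt c hcb
          rw [pos_true c hca] at hval
          omega
      | false =>
        cases hcb : c b' with
        | true =>
          exfalso
          have h1 := Lc_lt_Tc c b' hcb
          have h2 := pos_false_gt c hca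
          rw [pos_true c hcb] at hval
          omega
        | false =>
          rw [pos_false c hca, pos_false c hcb] at hval
          have ha := Rc_le_m hca
          have hb := Rc_le_m hcb
          have hval2 : Rc c a' = Rc c b' := by omega
          rcases lt_trichotomy a' b' with h | h | h
          · exact absurd hval2 (Nat.ne_of_lt (Rc_strict c h hca))
          · rw [h]
          · exact absurd hval2.symm (Nat.ne_of_lt (Rc_strict c h hcb))

noncomputable def permOf (c : Fin (m+1) → Bool) : Equiv.Perm (Fin (m+2)) :=
  (Equiv.ofBijective (posFun c) ((Finite.injective_iff_bijective).mp (posFun_inj c))).symm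

lemma posFun_permOf (c : Fin (m+1) → Bool) (i : Fin (m+2)) : posFun c (permOf c i) = i :=
  (Equiv.ofBijective (posFun c) ((Finite.injective_iff_bijective).mp (posFun_inj c))).apply_symm_apply i

lemma permOf_posFun (c : Fin (m+1) → Bool) (v : Fin (m+2)) : permOf c (posFun c v) = v :=
  (Equiv.ofBijective (posFun c) ((Finite.injective_iff_bijective).mp (posFun_inj c))).symm_apply_apply v

lemma permOf_symm_eq (c : Fin (m+1) → Bool) (v : Fin (m+2)) :
    (permOf c).symm v = posFun c v := rfl

lemma permOf_unimodal (c : Fin (m+1) → Bool) : Unimodal (permOf c) := by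
  refine ⟨⟨Tc c, by have := Tc_le c; omega⟩, ?_, ?_⟩
  · intro i hi j hj hij
    simp only [Set.mem_setOf_eq] at hi hj
    have hjv : j.val ≤ Tc c := hj
    have hiv : i.val < Tc c := lt_of_lt_of_le hij hjv
    obtain ⟨v', hv, hcv⟩ := lt_peak_shape c (permOf c i)
      (by rw [posFun_permOf]; exact hiv)
    rcases eq_or_lt_of_le hjv with hje | hjlt
    · have : permOf c j = Fin.last (m+1) :=
        eq_peak_shape c _ (by rw [posFun_permOf]; exact hje.symm ▸ rfl)
      rw [this, hv]
      exact Fin.castSucc_lt_last v'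
    · obtain ⟨w', hw, hcw⟩ := lt_peak_shape c (permOf c j)
        (by rw [posFun_permOf]; exact hjlt)
      have hLi : Lc c v' = i.val := by
        have h' := posFun_permOf c i
        rw [hv] at h'
        have h2 := congrArg Fin.val h'
        rwa [pos_true c hcv] at h2
      have hLj : Lc c w' = j.val := by
        have h' := posFun_permOf c j
        rw [hw] at h'
        have h2 := congrArg Fin.val h'
        rwa [pos_true c hcw] at h2
      rw [hv, hw, Fin.castSucc_lt_castSucc_iff]
      by_contra hle
      push_neg at hle
      have := Lc_mono c hle
      have hij' : i.val < j.val := hij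
      omega
  · intro i hi j hj hij
    simp only [Set.mem_setOf_eq] at hi hj
    have hiv : Tc c ≤ i.val := hi
    have hjv : Tc c < j.val := lt_of_le_of_lt hiv hij
    obtain ⟨w', hw, hcw⟩ := gt_peak_shape c (permOf c j)
      (by rw [posFun_permOf]; exact hjv)
    rcases eq_or_lt_of_le hiv with hie | hilt
    · have : permOf c i = Fin.last (m+1) :=
        eq_peak_shape c _ (by rw [posFun_permOf]; exact hie ▸ rfl)
      rw [this, hw]
      exact Fin.castSucc_lt_last w'
    · obtain ⟨v', hv, hcv⟩ := gt_peak_shape c (permOf c i)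
        (by rw [posFun_permOf]; exact hilt)
      have hLi : m + 1 - Rc c v' = i.val := by
        have h' := posFun_permOf c i
        rw [hv] at h'
        have h2 := congrArg Fin.val h'
        rwa [pos_false c hcv] at h2
      have hLj : m + 1 - Rc c w' = j.val := by
        have h' := posFun_permOf c j
        rw [hw] at h'
        have h2 := congrArg Fin.val h'
        rwa [pos_false c hcw] at h2
      rw [hv, hw, Fin.castSucc_lt_castSucc_iff]
      by_contra hle
      push_neg at hle
      have := Rc_mono c hle
      have hij' : i.val < j.val := hij
      have ha := Rc_le_m hcv
      have hb := Rc_le_m hcw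
      omega

lemma Lc_zero (c : Fin (m+1) → Bool) : Lc c 0 = 0 := by
  apply Finset.sum_eq_zero
  intro w _
  simp [Fin.not_lt_zero]

lemma permOf_fix_iff (c : Fin (m+1) → Bool) :
    (∀ i, permOf c i ≠ i) ↔ (∀ v, posFun c v ≠ v) := by
  constructor
  · intro h v hv
    refine h v ?_
    conv_lhs => rw [← hv]
    exact permOf_posFun c v
  · intro h i hi
    refine h i ?_
    conv_lhs => rw [← hi]
    exact posFun_permOf c i

lemma permOf_derangement_iff (c : Fin (m+1) → Bool) :
    (∀ i, permOf c i ≠ i) ↔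
      (c 0 = false ∧ ∀ v', c v' = false → v'.val + Rc c v' ≠ m+1) := by
  rw [permOf_fix_iff]
  constructor
  · intro h
    constructor
    · by_contra h0
      rw [Bool.not_eq_false] at h0
      refine h ((0 : Fin (m+1)).castSucc) (Fin.ext ?_)
      rw [pos_true c h0, Lc_zero]
      simp
    · intro v' hv' heq
      refine h v'.castSucc (Fin.ext ?_)
      rw [pos_false c hv']
      have := Rc_le_m hv'
      simp only [Fin.coe_castSucc]
      omega
  · rintro ⟨h0, hcond⟩ v hv
    have hval := congrArg Fin.val hv
    induction v using Fin.lastCases with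
    | last =>
      rw [pos_last] at hval
      have h1 := Tc_add_Fc c
      have h2 := Fc_pos_of_zero_false c h0
      simp at hval
      omega
    | cast v' =>
      cases hc : c v' with
      | true =>
        rw [pos_true c hc] at hval
        have := Lc_lt_val c v' h0 hc
        simp at hval
        omega
      | false =>
        rw [pos_false c hc] at hval
        have h1 := Rc_le_m hc
        refine hcond v' hc ?_
        simp at hval
        omega

lemma Lc_eq_card {s : ℕ} (c : Fin s → Bool) (v : Fin s) :
    Lc c v = (Finset.univ.filter (fun w => w < v ∧ c w = true)).card := by
  unfold Lc
  rw [← Nat.cast_id ((Finset.univ.filter (fun w => w < v ∧ c w = true)).card),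
    ← Finset.sum_boole]

lemma Rc_eq_card {s : ℕ} (c : Fin s → Bool) (v : Fin s) :
    Rc c v = (Finset.univ.filter (fun w => w < v ∧ c w = false)).card := by
  unfold Rc
  rw [← Nat.cast_id ((Finset.univ.filter (fun w => w < v ∧ c w = false)).card),
    ← Finset.sum_boole]

lemma Tc_eq_card {s : ℕ} (c : Fin s → Bool) :
    Tc c = (Finset.univ.filter (fun w => c w = true)).card := by
  unfold Tc
  rw [← Nat.cast_id ((Finset.univ.filter (fun w => c w = true)).card), ← Finset.sum_boole]

def cOf (σ : Equiv.Perm (Fin (m+2))) : Fin (m+1) → Bool :=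
  fun v' => decide (σ.symm v'.castSucc < σ.symm (Fin.last (m+1)))

section Backward

variable {σ : Equiv.Perm (Fin (m+2))} {p : Fin (m+2)}
  (hmono : StrictMonoOn σ {i | i ≤ p}) (hanti : StrictAntiOn σ {i | p ≤ i})

include hmono hanti in
lemma apply_peak : σ p = Fin.last (m+1) := by
  by_contra hne
  set j := σ.symm (Fin.last (m+1)) with hj
  have hσj : σ j = Fin.last (m+1) := σ.apply_symm_apply _
  have hjp : j ≠ p := by intro h; rw [h] at hσj; exact hne hσj
  rcases lt_or_gt_of_ne hjp with h | h
  · have := hmono (Set.mem_setOf_eq ▸ le_of_lt h) (Set.mem_setOf_eq ▸ le_refl p) h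
    rw [hσj] at this
    exact absurd (Fin.le_last (σ p)) (not_le_of_gt this)
  · have := hanti (Set.mem_setOf_eq ▸ le_refl p) (Set.mem_setOf_eq ▸ le_of_lt h) h
    rw [hσj] at this
    exact absurd (Fin.le_last (σ p)) (not_le_of_gt this)

include hmono hanti in
lemma symm_last : σ.symm (Fin.last (m+1)) = p := by
  rw [← apply_peak hmono hanti]; exact σ.symm_apply_apply p

include hmono hanti in
lemma cOf_eq_decide (v' : Fin (m+1)) :
    cOf σ v' = decide (σ.symm v'.castSucc < p) := by
  rw [cOf, symm_last hmono hanti]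

include hmono hanti in
lemma symm_castSucc_ne_peak (v' : Fin (m+1)) : σ.symm v'.castSucc ≠ p := by
  intro h
  have : v'.castSucc = σ p := by rw [← h, σ.apply_symm_apply]
  rw [apply_peak hmono hanti] at this
  exact absurd this (Fin.ext_iff.not.mpr (by have := v'.isLt; simp [Fin.last]; omega))

include hmono hanti in
lemma claimC : Tc (cOf σ) = p.val := by
  rw [Tc_eq_card]
  rw [← Fin.card_Iio (b := p)]
  apply Finset.card_bij (fun w _ => σ.symm w.castSucc)
  · intro w hw
    simp only [Finset.mem_filter, Finset.mem_univ, true_and] at hw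
    rw [cOf_eq_decide hmono hanti, decide_eq_true_iff] at hw
    simpa using hw
  · intro a _ b _ hab
    exact Fin.castSucc_injective _ (σ.symm.injective hab)
  · intro b hb
    simp only [Finset.mem_Iio] at hb
    have hb' : σ b < σ p := hmono (Set.mem_setOf_eq ▸ le_of_lt hb)
      (Set.mem_setOf_eq ▸ le_refl p) hb
    rw [apply_peak hmono hanti] at hb'
    obtain ⟨w, hw⟩ := Fin.exists_castSucc_eq.mpr (Fin.ne_last_of_lt hb')
    refine ⟨w, ?_, by rw [hw, σ.symm_apply_apply]⟩
    simp only [Finset.mem_filter, Finset.mem_univ, true_and]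
    rw [cOf_eq_decide hmono hanti, decide_eq_true_iff, hw, σ.symm_apply_apply]
    exact hb

include hmono hanti in
lemma claimA {v' : Fin (m+1)} (hq : σ.symm v'.castSucc < p) :
    Lc (cOf σ) v' = (σ.symm v'.castSucc).val := by
  set q := σ.symm v'.castSucc with hqdef
  have hσq : σ q = v'.castSucc := σ.apply_symm_apply _
  rw [Lc_eq_card, ← Fin.card_Iio (b := q)]
  apply Finset.card_bij (fun w _ => σ.symm w.castSucc)
  · intro w hw
    simp only [Finset.mem_filter, Finset.mem_univ, true_and] at hw
    obtain ⟨hwv, hcw⟩ := hw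
    rw [cOf_eq_decide hmono hanti, decide_eq_true_iff] at hcw
    simp only [Finset.mem_Iio]
    set qw := σ.symm w.castSucc with hqwdef
    have hσqw : σ qw = w.castSucc := σ.apply_symm_apply _
    rcases lt_trichotomy qw q with h | h | h
    · exact h
    · exfalso
      have : w.castSucc = v'.castSucc := by rw [← hσqw, h, hσq]
      exact absurd (Fin.castSucc_injective _ this ▸ hwv) (lt_irrefl _)
    · exfalso
      have := hmono (Set.mem_setOf_eq ▸ le_of_lt hq) (Set.mem_setOf_eq ▸ le_of_lt hcw) h
      rw [hσq, hσqw, Fin.castSucc_lt_castSucc_iff] at this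
      exact absurd hwv (not_lt_of_gt this)
  · intro a _ b _ hab
    exact Fin.castSucc_injective _ (σ.symm.injective hab)
  · intro b hb
    simp only [Finset.mem_Iio] at hb
    have hbp : b < p := lt_trans hb hq
    have hb' : σ b < σ q := hmono (Set.mem_setOf_eq ▸ le_of_lt hbp)
      (Set.mem_setOf_eq ▸ le_of_lt hq) hb
    rw [hσq] at hb'
    have hnl : σ b ≠ Fin.last (m+1) :=
      Fin.ne_last_of_lt (lt_of_lt_of_le hb' (Fin.le_last _))
    obtain ⟨w, hw⟩ := Fin.exists_castSucc_eq.mpr hnl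
    refine ⟨w, ?_, by rw [hw, σ.symm_apply_apply]⟩
    simp only [Finset.mem_filter, Finset.mem_univ, true_and]
    constructor
    · rw [← Fin.castSucc_lt_castSucc_iff, hw]; exact hb'
    · rw [cOf_eq_decide hmono hanti, decide_eq_true_iff, hw, σ.symm_apply_apply]
      exact hbp

include hmono hanti in
lemma claimB {v' : Fin (m+1)} (hq : ¬ σ.symm v'.castSucc < p) :
    Rc (cOf σ) v' = m + 1 - (σ.symm v'.castSucc).val := by
  set q := σ.symm v'.castSucc with hqdef
  have hσq : σ q = v'.castSucc := σ.apply_symm_apply _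
  have hpq : p < q := lt_of_le_of_ne (not_lt.mp hq) (Ne.symm (symm_castSucc_ne_peak hmono hanti v'))
  have hcard : (Finset.Ioi q).card = m + 1 - q.val := by
    rw [Fin.card_Ioi]; omega
  rw [Rc_eq_card, ← hcard]
  apply Finset.card_bij (fun w _ => σ.symm w.castSucc)
  · intro w hw
    simp only [Finset.mem_filter, Finset.mem_univ, true_and] at hw
    obtain ⟨hwv, hcw⟩ := hw
    rw [cOf_eq_decide hmono hanti] at hcw
    have hcw' : ¬ σ.symm w.castSucc < p := by
      intro h; rw [decide_eq_true_iff.mpr h] at hcw; exact Bool.noConfusion hcw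
    set qw := σ.symm w.castSucc with hqwdef
    have hσqw : σ qw = w.castSucc := σ.apply_symm_apply _
    have hpqw : p < qw := lt_of_le_of_ne (not_lt.mp hcw')
      (Ne.symm (symm_castSucc_ne_peak hmono hanti w))
    simp only [Finset.mem_Ioi]
    rcases lt_trichotomy q qw with h | h | h
    · exact h
    · exfalso
      have : v'.castSucc = w.castSucc := by rw [← hσq, h, hσqw]
      exact absurd (Fin.castSucc_injective _ this ▸ hwv) (lt_irrefl _)
    · exfalso
      have := hanti (Set.mem_setOf_eq ▸ le_of_lt hpqw) (Set.mem_setOf_eq ▸ le_of_lt hpq) h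
      rw [hσq, hσqw, Fin.castSucc_lt_castSucc_iff] at this
      exact absurd hwv (not_lt_of_gt this)
  · intro a _ b _ hab
    exact Fin.castSucc_injective _ (σ.symm.injective hab)
  · intro b hb
    simp only [Finset.mem_Ioi] at hb
    have hpb : p < b := lt_trans hpq hb
    have hb' : σ b < σ q := hanti (Set.mem_setOf_eq ▸ le_of_lt hpq)
      (Set.mem_setOf_eq ▸ le_of_lt hpb) hb
    rw [hσq] at hb'
    have hnl : σ b ≠ Fin.last (m+1) :=
      Fin.ne_last_of_lt (lt_of_lt_of_le hb' (Fin.le_last _))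
    obtain ⟨w, hw⟩ := Fin.exists_castSucc_eq.mpr hnl
    refine ⟨w, ?_, by rw [hw, σ.symm_apply_apply]⟩
    simp only [Finset.mem_filter, Finset.mem_univ, true_and]
    constructor
    · rw [← Fin.castSucc_lt_castSucc_iff, hw]; exact hb'
    · rw [cOf_eq_decide hmono hanti]
      simp only [decide_eq_false_iff_not]
      rw [hw, σ.symm_apply_apply]
      exact fun h => absurd (lt_trans hpb h) (lt_irrefl p)

include hmono hanti in
lemma posFun_cOf_eq : posFun (cOf σ) = ⇑σ.symm := by
  funext v
  apply Fin.ext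
  induction v using Fin.lastCases with
  | last =>
    rw [pos_last, claimC hmono hanti, symm_last hmono hanti]
  | cast v' =>
    cases hc : cOf σ v' with
    | true =>
      rw [cOf_eq_decide hmono hanti, decide_eq_true_iff] at hc
      rw [pos_true (cOf σ) (by rw [cOf_eq_decide hmono hanti, decide_eq_true_iff]; exact hc)]
      exact claimA hmono hanti hc
    | false =>
      have hc' : ¬ σ.symm v'.castSucc < p := by
        rw [cOf_eq_decide hmono hanti, decide_eq_false_iff_not] at hc
        exact hc
      rw [pos_false (cOf σ) hc]
      rw [claimB hmono hanti hc']
      have := (σ.symm v'.castSucc).isLt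
      omega

end Backward

lemma permOf_cOf {σ : Equiv.Perm (Fin (m+2))} (hσ : Unimodal σ) : permOf (cOf σ) = σ := by
  obtain ⟨p, hmono, hanti⟩ := hσ
  have hfun : posFun (cOf σ) = ⇑σ.symm := posFun_cOf_eq hmono hanti
  have h1 : Equiv.ofBijective (posFun (cOf σ))
      ((Finite.injective_iff_bijective).mp (posFun_inj (cOf σ))) = σ.symm := by
    apply Equiv.ext
    intro v
    show posFun (cOf σ) v = σ.symm v
    rw [hfun]
  rw [permOf, h1, Equiv.symm_symm]

lemma cOf_permOf (c : Fin (m+1) → Bool) : cOf (permOf c) = c := by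
  funext v'
  rw [cOf, permOf_symm_eq, permOf_symm_eq]
  cases hc : c v' with
  | true =>
    rw [decide_eq_true_iff.mpr]
    rw [Fin.lt_def, pos_true c hc, pos_last]
    exact Lc_lt_Tc c v' hc
  | false =>
    rw [decide_eq_false_iff_not.mpr]
    rw [Fin.lt_def, pos_false c hc, pos_last]
    have := pos_false_gt c hc
    rw [pos_false c hc] at this
    omega

lemma cond_iff (m : ℕ) (c : Fin (m+1) → Bool) :
    (c 0 = false ∧ ∀ v', c v' = false → v'.val + Rc c v' ≠ m+1) ↔
      (c 0 = false ∧ Mcond (m+1) ((m:ℤ)+1) c) := by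
  constructor
  · rintro ⟨h0, h⟩
    refine ⟨h0, fun v hv heq => h v hv ?_⟩
    exact_mod_cast heq
  · rintro ⟨h0, h⟩
    refine ⟨h0, fun v hv heq => h v hv ?_⟩
    exact_mod_cast heq

noncomputable def mainEquiv (m : ℕ) :
    {σ : Equiv.Perm (Fin (m+2)) // Unimodal σ ∧ ∀ i, σ i ≠ i} ≃
      {c : Fin (m+1) → Bool //
        c 0 = false ∧ ∀ v', c v' = false → v'.val + Rc c v' ≠ m+1} where
  toFun x := ⟨cOf x.1, by
    have hperm := permOf_cOf x.2.1
    have hd := x.2.2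
    rw [← hperm] at hd
    exact (permOf_derangement_iff (cOf x.1)).mp hd⟩
  invFun y := ⟨permOf y.1, permOf_unimodal y.1, (permOf_derangement_iff y.1).mpr y.2⟩
  left_inv x := Subtype.ext (permOf_cOf x.2.1)
  right_inv y := Subtype.ext (cOf_permOf y.1)

noncomputable def condEquiv (m : ℕ) :
    {c : Fin (m+1) → Bool // c 0 = false ∧ Mcond (m+1) ((m:ℤ)+1) c} ≃
      {c' : Fin m → Bool // Mcond m ((m:ℤ)-1) c'} where
  toFun x := ⟨x.1 ∘ Fin.succ, by
    have h := ((Mcond_succ_iff ((m:ℤ)+1) x.1).mp x.2.2).2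
    rw [x.2.1] at h
    simpa [show ((m:ℤ)+1-2) = (m:ℤ)-1 by ring] using h⟩
  invFun y := ⟨Fin.cons false y.1, by
    refine ⟨by simp, ?_⟩
    rw [Mcond_succ_iff]
    refine ⟨fun _ => by omega, ?_⟩
    have h1 : (Fin.cons false y.1 : Fin (m+1) → Bool) 0 = false := by simp
    rw [h1, if_pos rfl]
    have h2 : (Fin.cons false y.1 : Fin (m+1) → Bool) ∘ Fin.succ = y.1 := by
      funext w; simp
    rw [h2, show ((m:ℤ)+1-2) = (m:ℤ)-1 by ring]
    exact y.2⟩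
  left_inv x := Subtype.ext (by
    funext v
    refine Fin.cases ?_ (fun w => ?_) v
    · simp [x.2.1.symm]
    · simp)
  right_inv y := Subtype.ext (by funext w; simp)

/-- The number of unimodal derangements (no fixed points) of `{1,…,n}`
equals `(2^(n-1) + (-1)^n)/3`, stated with the denominator cleared. -/
theorem card_unimodal_derangements (n : ℕ) (hn : 1 ≤ n) :
    3 * (Nat.card {σ : Equiv.Perm (Fin n) // Unimodal σ ∧ ∀ i, σ i ≠ i} : ℤ) =
      2 ^ (n - 1) + (-1) ^ n := by
  match n, hn with
  | 1, _ =>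
    have hE : IsEmpty {σ : Equiv.Perm (Fin 1) // Unimodal σ ∧ ∀ i, σ i ≠ i} :=
      ⟨fun x => x.2.2 0 (Subsingleton.elim _ _)⟩
    rw [Nat.card_of_isEmpty]
    norm_num
  | (m+2), _ =>
    have h1 : Nat.card {σ : Equiv.Perm (Fin (m+2)) // Unimodal σ ∧ ∀ i, σ i ≠ i} =
        G m (m+1) := by
      rw [Nat.card_congr (mainEquiv m),
        Nat.card_congr (Equiv.subtypeEquivRight (cond_iff m)),
        Nat.card_congr (condEquiv m), cardM m ((m:ℤ)-1)]
      have : ((m:ℤ)-1+2).toNat = m+1 := by omega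
      rw [this]
    rw [h1, G_diag m]
    have hs : ((-1:ℤ))^(m+2) = (-1:ℤ)^m := by rw [pow_add]; norm_num
    rw [show (m+2-1) = m+1 from rfl, hs]
end

section
/- For every n ≥ 1, c_n = (1/n) · Σ_{d | n, d odd} μ(d) · 2^(n/d - 1) is a positive integer. -/
open Finset ArithmeticFunction

/-- Key p-adic lemma: `p^k ∣ x^(p^k s) - x^(p^(k-1) s)`. -/
lemma key_pp (x : ℤ) {p : ℕ} (hp : p.Prime) (k s : ℕ) (hk : 1 ≤ k) :
    ((p : ℤ)) ^ k ∣ x ^ (p ^ k * s) - x ^ (p ^ (k - 1) * s) := by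
  obtain ⟨j, rfl⟩ : ∃ j, k = j + 1 := ⟨k - 1, by omega⟩
  haveI : Fact p.Prime := ⟨hp⟩
  have h1 : (p : ℤ) ∣ x ^ (p * s) - x ^ s := by
    have : ((x ^ (p * s) - x ^ s : ℤ) : ZMod p) = 0 := by
      push_cast
      rw [mul_comm p s, pow_mul]
      rw [ZMod.pow_card ((x : ZMod p) ^ s)]
      ring
    exact (ZMod.intCast_zmod_eq_zero_iff_dvd _ p).mp this
  have h2 := dvd_sub_pow_of_dvd_sub h1 j
  have e1 : (x ^ (p * s)) ^ p ^ j = x ^ (p ^ (j + 1) * s) := by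
    rw [← pow_mul]; ring_nf
  have e2 : (x ^ s) ^ p ^ j = x ^ (p ^ (j + 1 - 1) * s) := by
    rw [← pow_mul, Nat.add_sub_cancel, mul_comm]
  rw [e1, e2] at h2
  exact_mod_cast h2

/-- Odd... filter of non-multiples of `p` among divisors of `p^j * t`. -/
lemma filter_not_dvd (p : ℕ) (hp : p.Prime) {t : ℕ} (ht : t ≠ 0) (hpt : ¬ p ∣ t) (j : ℕ) :
    (p ^ j * t).divisors.filter (fun d => ¬ p ∣ d) = t.divisors := by
  ext d
  simp only [Finset.mem_filter, Nat.mem_divisors]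
  constructor
  · rintro ⟨⟨hd, _⟩, hpd⟩
    refine ⟨?_, ht⟩
    have hcop : Nat.Coprime d (p ^ j) :=
      Nat.Coprime.pow_right _ ((Nat.coprime_comm).mp (hp.coprime_iff_not_dvd.mpr hpd))
    exact (Nat.Coprime.dvd_of_dvd_mul_left hcop hd)
  · rintro ⟨hd, _⟩
    refine ⟨⟨hd.mul_left _, mul_ne_zero (pow_ne_zero _ hp.pos.ne') ht⟩, fun hpd => hpt (hpd.trans hd)⟩

lemma gauss_pp (x : ℤ) {p t k : ℕ} (hp : p.Prime) (ht : t ≠ 0) (hpt : ¬ p ∣ t) (hk : 1 ≤ k) :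
    ((p : ℤ)) ^ k ∣ ∑ d ∈ (p ^ k * t).divisors,
      (moebius d : ℤ) * x ^ ((p ^ k * t) / d) := by
  set m := p ^ k * t with hm
  set F : ℕ → ℤ := fun d => (moebius d : ℤ) * x ^ (m / d) with hF
  have hsplit : ∑ d ∈ m.divisors, F d
      = (∑ d ∈ m.divisors.filter (fun d => ¬ p ∣ d), F d)
        + ∑ d ∈ m.divisors.filter (fun d => p ∣ d), F d := by
    rw [← Finset.sum_filter_add_sum_filter_not m.divisors (fun d => p ∣ d) F, add_comm]
  -- second sum reindexed by e = d / p
  have hre : ∑ d ∈ m.divisors.filter (fun d => p ∣ d), F d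
      = ∑ e ∈ (p ^ (k - 1) * t).divisors, F (p * e) := by
    apply Finset.sum_nbij' (fun d => d / p) (fun e => p * e)
    · intro d hd
      simp only [Finset.mem_filter, Nat.mem_divisors] at hd
      obtain ⟨⟨hdm, _⟩, hpd⟩ := hd
      obtain ⟨e, rfl⟩ := hpd
      rw [Nat.mul_div_cancel_left _ hp.pos]
      have hm' : m = p * (p ^ (k - 1) * t) := by
        rw [hm, ← mul_assoc, ← pow_succ']
        congr 2
        omega
      rw [hm'] at hdm
      exact Nat.mem_divisors.mpr ⟨(mul_dvd_mul_iff_left hp.pos.ne').mp hdm,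
        mul_ne_zero (pow_ne_zero _ hp.pos.ne') ht⟩
    · intro e he
      simp only [Nat.mem_divisors] at he
      simp only [Finset.mem_filter, Nat.mem_divisors]
      refine ⟨⟨?_, mul_ne_zero (pow_ne_zero _ hp.pos.ne') ht⟩, dvd_mul_right _ _⟩
      have hm' : m = p * (p ^ (k - 1) * t) := by
        rw [hm, ← mul_assoc, ← pow_succ']
        congr 2
        omega
      rw [hm']
      exact mul_dvd_mul_left p he.1
    · intro d hd
      simp only [Finset.mem_filter] at hd
      exact Nat.mul_div_cancel' hd.2
    · intro e _
      exact Nat.mul_div_cancel_left _ hp.pos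
    · intro d hd
      simp only [Finset.mem_filter] at hd
      rw [Nat.mul_div_cancel' hd.2]
  -- kill terms with p ∣ e in the reindexed sum
  have hzero : ∑ e ∈ (p ^ (k - 1) * t).divisors, F (p * e)
      = ∑ e ∈ t.divisors, F (p * e) := by
    rw [← filter_not_dvd p hp ht hpt (k - 1)]
    symm
    apply Finset.sum_filter_of_ne
    intro e _ hne hpe
    apply hne
    have : ¬ Squarefree (p * e) := by
      intro hsq
      exact hp.not_isUnit (hsq p (mul_dvd_mul dvd_rfl hpe))
    rw [hF]
    simp [moebius_eq_zero_of_not_squarefree this]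
  have hfirst : m.divisors.filter (fun d => ¬ p ∣ d) = t.divisors :=
    filter_not_dvd p hp ht hpt k
  rw [hsplit, hre, hzero, hfirst, ← Finset.sum_add_distrib]
  apply Finset.dvd_sum
  intro e he
  have het : e ∣ t := (Nat.mem_divisors.mp he).1
  have h1 : m / e = p ^ k * (t / e) := by
    rw [hm, Nat.mul_div_assoc _ het]
  have h2 : m / (p * e) = p ^ (k - 1) * (t / e) := by
    have hm' : m = p * (p ^ (k - 1) * t) := by
      rw [hm, ← mul_assoc, ← pow_succ']
      congr 2
      omega
    rw [hm', Nat.mul_div_mul_left _ _ hp.pos, Nat.mul_div_assoc _ het]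
  have hcop : Nat.Coprime p e := hp.coprime_iff_not_dvd.mpr (fun h => hpt (h.trans het))
  have hmu : (moebius (p * e) : ℤ) = - moebius e := by
    rw [isMultiplicative_moebius.map_mul_of_coprime hcop, moebius_apply_prime hp]
    ring
  have : F e + F (p * e) = (moebius e : ℤ) * (x ^ (p ^ k * (t / e)) - x ^ (p ^ (k - 1) * (t / e))) := by
    rw [hF]
    simp only [h1, h2, hmu]
    ring
  rw [this]
  exact Dvd.dvd.mul_left (key_pp x hp k (t / e) hk) _

lemma gauss_cong (x : ℤ) (m : ℕ) (hm : m ≠ 0) :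
    (m : ℤ) ∣ ∑ d ∈ m.divisors, (moebius d : ℤ) * x ^ (m / d) := by
  have hfac : (m : ℤ) = ∏ p ∈ m.primeFactors, (p : ℤ) ^ m.factorization p := by
    conv_lhs => rw [← Nat.factorization_prod_pow_eq_self hm]
    rw [Nat.prod_factorization_eq_prod_primeFactors]
    push_cast
    rfl
  rw [hfac]
  apply Finset.prod_dvd_of_coprime
  · intro p hps q hqs hne
    have hp := Nat.prime_of_mem_primeFactors hps
    have hq := Nat.prime_of_mem_primeFactors hqs
    have : Nat.Coprime (p ^ m.factorization p) (q ^ m.factorization q) :=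
      Nat.Coprime.pow _ _ ((Nat.coprime_primes hp hq).mpr hne)
    have := Nat.isCoprime_iff_coprime.mpr this
    push_cast at this
    simp only [Function.onFun]
    exact_mod_cast this
  · intro p hps
    have hp := Nat.prime_of_mem_primeFactors hps
    set k := m.factorization p with hkdef
    have hk : 1 ≤ k := by
      have := Nat.Prime.factorization_pos_of_dvd hp hm (Nat.dvd_of_mem_primeFactors hps)
      omega
    set t := m / p ^ k with htdef
    have hmt : p ^ k * t = m := Nat.ordProj_mul_ordCompl_eq_self m p
    have hpt : ¬ p ∣ t := Nat.not_dvd_ordCompl hp hm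
    have ht : t ≠ 0 := by
      intro h
      rw [h, mul_zero] at hmt
      exact hm hmt.symm
    rw [← hmt]
    exact gauss_pp x hp ht hpt hk

lemma aux_lt : ∀ q r : ℕ, r < 3 → 3 * q + r < 2 ^ (2 * q + r)
  | 0, r, hr => by interval_cases r <;> decide
  | q + 1, r, hr => by
    have ih := aux_lt q r hr
    have h4 : 2 ^ (2 * (q + 1) + r) = 4 * 2 ^ (2 * q + r) := by
      rw [show 2 * (q + 1) + r = (2 * q + r) + 2 by ring, pow_add]; ring
    omega

lemma lt_two_pow_sub (n : ℕ) : n < 2 ^ (n - n / 3) := by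
  have h1 := aux_lt (n / 3) (n % 3) (Nat.mod_lt _ (by norm_num))
  have h2 := Nat.div_add_mod n 3
  have h3 : n - n / 3 = 2 * (n / 3) + n % 3 := by omega
  rw [h3]
  omega

lemma abs_moebius_le_one (d : ℕ) : |(moebius d : ℤ)| ≤ 1 := by
  rcases moebius_eq_or d with h | h | h <;> simp [h]

/-- `c n = (1/n) Σ_{d ∣ n, d odd} μ(d) 2^(n/d - 1)`. -/
noncomputable def cCoeff (n : ℕ) : ℚ :=
  (1 / n) * ∑ d ∈ n.divisors.filter (fun d => Odd d),
    (ArithmeticFunction.moebius d : ℚ) * 2 ^ (n / d - 1)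

/-- `c_n` is a positive integer for every `n ≥ 1`. -/
theorem cCoeff_pos_integer (n : ℕ) (hn : 1 ≤ n) :
    ∃ m : ℕ, 0 < m ∧ (m : ℚ) = cCoeff n := by
  classical
  set a := n.factorization 2 with ha
  set M := n / 2 ^ a with hMdef
  have hn0 : n ≠ 0 := by omega
  have hnM : 2 ^ a * M = n := Nat.ordProj_mul_ordCompl_eq_self n 2
  have h2M : ¬ 2 ∣ M := Nat.not_dvd_ordCompl Nat.prime_two hn0
  have hM0 : M ≠ 0 := by
    intro h; rw [h, mul_zero] at hnM; exact hn0 hnM.symm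
  have hModd : Odd M := Nat.odd_iff.mpr (by omega)
  have hMn : M ∣ n := ⟨2 ^ a, by rw [← hnM]; ring⟩
  -- the odd divisors of n are exactly the divisors of M
  have hfilt : n.divisors.filter (fun d => Odd d) = M.divisors := by
    ext d
    simp only [Finset.mem_filter, Nat.mem_divisors]
    constructor
    · rintro ⟨⟨hd, _⟩, hodd⟩
      refine ⟨?_, hM0⟩
      have hd2 : ¬ 2 ∣ d := by rw [Nat.odd_iff] at hodd; omega
      have hcop : Nat.Coprime d (2 ^ a) :=
        Nat.Coprime.pow_right _ (Nat.coprime_comm.mp (Nat.prime_two.coprime_iff_not_dvd.mpr hd2))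
      rw [← hnM] at hd
      exact hcop.dvd_of_dvd_mul_left hd
    · rintro ⟨hd, _⟩
      have hd2 : ¬ 2 ∣ d := fun h2 => h2M (h2.trans hd)
      exact ⟨⟨hd.trans hMn, hn0⟩, Nat.odd_iff.mpr (by omega)⟩
  set T : ℤ := ∑ d ∈ M.divisors, (moebius d : ℤ) * 2 ^ (n / d - 1) with hT
  -- basic facts about divisors of M
  have hdiv : ∀ d ∈ M.divisors, n / d = 2 ^ a * (M / d) := by
    intro d hd
    rw [← hnM, Nat.mul_div_assoc _ (Nat.mem_divisors.mp hd).1]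
  have hdivpos : ∀ d ∈ M.divisors, 2 ^ a ≤ n / d := by
    intro d hd
    rw [hdiv d hd]
    have h1 : 1 ≤ M / d :=
      Nat.div_pos (Nat.le_of_dvd (Nat.pos_of_ne_zero hM0) (Nat.mem_divisors.mp hd).1)
        (Nat.pos_of_mem_divisors hd)
    calc 2 ^ a = 2 ^ a * 1 := by ring
    _ ≤ 2 ^ a * (M / d) := Nat.mul_le_mul_left _ h1
  -- 2^a divides T
  have h2aT : (2 : ℤ) ^ a ∣ T := by
    apply Finset.dvd_sum
    intro d hd
    have hle : a ≤ n / d - 1 := by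
      have := hdivpos d hd
      have := Nat.lt_two_pow_self (n := a)
      omega
    exact Dvd.dvd.mul_left ((pow_dvd_pow (2 : ℤ) hle).trans dvd_rfl) _
  -- M divides T
  have hMT : (M : ℤ) ∣ T := by
    have hG := gauss_cong ((2 : ℤ) ^ 2 ^ a) M hM0
    have heq : ∑ d ∈ M.divisors, (moebius d : ℤ) * ((2 : ℤ) ^ 2 ^ a) ^ (M / d) = 2 * T := by
      rw [hT, Finset.mul_sum]
      apply Finset.sum_congr rfl
      intro d hd
      have h1 : ((2 : ℤ) ^ 2 ^ a) ^ (M / d) = 2 ^ (n / d) := by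
        rw [← pow_mul, ← hdiv d hd]
      have h2 : (2 : ℤ) ^ (n / d) = 2 * 2 ^ (n / d - 1) := by
        rw [← pow_succ']
        congr 1
        have := hdivpos d hd
        have : 1 ≤ 2 ^ a := Nat.one_le_two_pow
        omega
      rw [h1, h2]
      ring
    rw [heq] at hG
    have hcopM : IsCoprime (M : ℤ) (2 : ℤ) := by
      have : Nat.Coprime M 2 :=
        Nat.coprime_comm.mp (Nat.prime_two.coprime_iff_not_dvd.mpr h2M)
      exact_mod_cast Nat.isCoprime_iff_coprime.mpr this
    exact hcopM.dvd_of_dvd_mul_left hG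
  -- n divides T
  have hnT : (n : ℤ) ∣ T := by
    have hcop : IsCoprime ((2 : ℤ) ^ a) (M : ℤ) := by
      have : Nat.Coprime (2 ^ a) M :=
        Nat.Coprime.pow_left _ (Nat.prime_two.coprime_iff_not_dvd.mpr h2M)
      have := Nat.isCoprime_iff_coprime.mpr this
      push_cast at this
      exact this
    have : ((2 : ℤ) ^ a) * (M : ℤ) ∣ T := hcop.mul_dvd h2aT hMT
    convert this using 1
    rw [← hnM]
    push_cast
    ring
  -- positivity of T
  have hTpos : 0 < T := by
    have h1mem : 1 ∈ M.divisors := Nat.one_mem_divisors.mpr hM0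
    have hsplit : T = 2 ^ (n - 1) + ∑ d ∈ M.divisors.erase 1, (moebius d : ℤ) * 2 ^ (n / d - 1) := by
      rw [hT, ← Finset.add_sum_erase _ _ h1mem]
      simp
    by_cases hM1 : M = 1
    · rw [hsplit]
      have : M.divisors.erase 1 = ∅ := by
        rw [hM1]
        simp [Nat.divisors_one]
      rw [this]
      simp only [Finset.sum_empty, add_zero]
      positivity
    · -- M ≥ 3, so n ≥ 3
      have hM3 : 3 ≤ M := by
        rcases hModd with ⟨j, hj⟩
        omega
      have hn3 : 3 ≤ n := le_trans hM3 (Nat.le_of_dvd (by omega) hMn)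
      set R := ∑ d ∈ M.divisors.erase 1, (moebius d : ℤ) * 2 ^ (n / d - 1) with hR
      have hcard : (M.divisors.erase 1).card ≤ n - 1 := by
        have h1 : M.divisors.card ≤ M := by
          have hsub : M.divisors ⊆ Finset.Icc 1 M := by
            intro d hd
            rw [Finset.mem_Icc]
            exact ⟨Nat.pos_of_mem_divisors hd, Nat.le_of_dvd (by omega) (Nat.mem_divisors.mp hd).1⟩
          calc M.divisors.card ≤ (Finset.Icc 1 M).card := Finset.card_le_card hsub
          _ = M := by rw [Nat.card_Icc]; omega
        rw [Finset.card_erase_of_mem h1mem]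
        have := Nat.le_of_dvd (by omega) hMn
        omega
      have hterm : ∀ d ∈ M.divisors.erase 1, |(moebius d : ℤ) * 2 ^ (n / d - 1)| ≤ 2 ^ (n / 3 - 1) := by
        intro d hd
        obtain ⟨hne, hdM⟩ := Finset.mem_erase.mp hd
        have hd2 : ¬ 2 ∣ d := fun h2 => h2M (h2.trans (Nat.mem_divisors.mp hdM).1)
        have hd3 : 3 ≤ d := by
          have := Nat.pos_of_mem_divisors hdM
          omega
        have hdiv3 : n / d ≤ n / 3 := Nat.div_le_div_left hd3 (by norm_num)
        rw [abs_mul, abs_pow, abs_two]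
        calc |(moebius d : ℤ)| * 2 ^ (n / d - 1) ≤ 1 * 2 ^ (n / d - 1) := by
              apply mul_le_mul_of_nonneg_right (abs_moebius_le_one d) (by positivity)
        _ = 2 ^ (n / d - 1) := by ring
        _ ≤ 2 ^ (n / 3 - 1) := pow_le_pow_right₀ one_le_two (by omega)
      have hRabs : |R| ≤ (n - 1 : ℕ) * 2 ^ (n / 3 - 1) := by
        calc |R| ≤ ∑ d ∈ M.divisors.erase 1, |(moebius d : ℤ) * 2 ^ (n / d - 1)| :=
              Finset.abs_sum_le_sum_abs _ _
        _ ≤ (M.divisors.erase 1).card • (2 ^ (n / 3 - 1) : ℤ) :=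
              Finset.sum_le_card_nsmul _ _ _ hterm
        _ = ((M.divisors.erase 1).card : ℤ) * 2 ^ (n / 3 - 1) := by
              rw [nsmul_eq_mul]
        _ ≤ (n - 1 : ℕ) * 2 ^ (n / 3 - 1) := by
              apply mul_le_mul_of_nonneg_right _ (by positivity)
              exact_mod_cast hcard
      have hnat : (n - 1) * 2 ^ (n / 3 - 1) < 2 ^ (n - 1) := by
        have h1 : n - 1 < 2 ^ (n - n / 3) := lt_of_le_of_lt (by omega) (lt_two_pow_sub n)
        calc (n - 1) * 2 ^ (n / 3 - 1) < 2 ^ (n - n / 3) * 2 ^ (n / 3 - 1) := by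
              apply Nat.mul_lt_mul_of_lt_of_le h1 le_rfl (by positivity)
        _ = 2 ^ (n - 1) := by
              rw [← pow_add]
              congr 1
              have : 1 ≤ n / 3 := by omega
              omega
      have hint : ((n - 1 : ℕ) : ℤ) * 2 ^ (n / 3 - 1) < 2 ^ (n - 1) := by
        exact_mod_cast hnat
      have := neg_abs_le R
      rw [hsplit]
      linarith [hRabs, hint, this]
  -- conclusion
  set c : ℤ := T / n with hc
  have hTc : (n : ℤ) * c = T := Int.mul_ediv_cancel' hnT
  have hcpos : 0 < c := by
    rcases lt_trichotomy c 0 with h | h | h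
    · nlinarith [hTc, hTpos, (by exact_mod_cast Nat.pos_of_ne_zero hn0 : (0:ℤ) < n)]
    · rw [h, mul_zero] at hTc; omega
    · exact h
  refine ⟨c.toNat, by omega, ?_⟩
  rw [cCoeff, hfilt]
  have hcast : ∑ d ∈ M.divisors, (ArithmeticFunction.moebius d : ℚ) * 2 ^ (n / d - 1) = (T : ℚ) := by
    rw [hT]
    push_cast
    rfl
  rw [hcast, ← hTc]
  have hnq : (n : ℚ) ≠ 0 := by exact_mod_cast hn0
  have h1 : ((c.toNat : ℚ)) = (c : ℚ) := by
    exact_mod_cast congrArg (fun z : ℤ => (z : ℚ)) (Int.toNat_of_nonneg hcpos.le)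
  rw [h1]
  push_cast
  field_simp
end

section
/- The identity ∏_{k≥1} ((1 + t^k)/(1 - t^k))^{c_k} = 1/(1 - 2t) holds as an identity of formal power series, where c_k = (1/k) · Σ_{d | k, d odd} μ(d) · 2^(k/d - 1). -/
open Finset

lemma moebius_sum_divisors (f : ℕ) :
    ∑ d ∈ f.divisors, ((ArithmeticFunction.moebius d : ℤ) : ℚ) =
      if f = 1 then 1 else 0 := by
  have h : ((ArithmeticFunction.moebius * ArithmeticFunction.zeta :
      ArithmeticFunction ℤ)) f = (1 : ArithmeticFunction ℤ) f := by
    rw [ArithmeticFunction.moebius_mul_coe_zeta]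
  rw [ArithmeticFunction.coe_mul_zeta_apply, ArithmeticFunction.one_apply] at h
  have h2 := congrArg (fun z : ℤ => (z : ℚ)) h
  simp only [Int.cast_sum] at h2
  rw [h2]
  split_ifs <;> norm_num

lemma divHelper {j a b : ℕ} (hj : j ≠ 0) (ha : a ∣ j) (hb : b ∣ a) :
    j / (j / a * b) = a / b := by
  have ha0' : a ≠ 0 := by rintro rfl; exact hj (Nat.eq_zero_of_zero_dvd ha)
  have ha0 : 0 < j / a := Nat.div_pos (Nat.le_of_dvd (Nat.pos_of_ne_zero hj) ha)
    (Nat.pos_of_ne_zero ha0')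
  obtain ⟨t, rfl⟩ := ha
  have ht : t ≠ 0 := by rintro rfl; exact hj (by simp)
  rw [Nat.mul_div_cancel_left t (Nat.pos_of_ne_zero ha0'), mul_comm a t,
    Nat.mul_div_mul_left _ _ (Nat.pos_of_ne_zero ht)]

lemma odd_of_dvd_odd {a b : ℕ} (h : a ∣ b) (hb : Odd b) : Odd a := by
  rcases Nat.even_or_odd a with he | ho
  · rw [Nat.even_iff] at he
    rw [Nat.odd_iff] at hb ⊢
    have h2 : (2 : ℕ) ∣ a := Nat.dvd_of_mod_eq_zero he
    have : (2 : ℕ) ∣ b := h2.trans h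
    omega
  · exact ho

lemma L1 (c : ℕ → ℕ) (hc : ∀ k, 1 ≤ k → (c k : ℚ) = cCoeff k) {j : ℕ} (hj : 1 ≤ j) :
    ∑ k ∈ j.divisors.filter (fun k => Odd (j / k)), 2 * (k : ℚ) * c k = 2 ^ j := by
  have hj0 : j ≠ 0 := by omega
  -- Step 1: expand c k
  have hstep : ∀ k ∈ j.divisors.filter (fun k => Odd (j / k)),
      2 * (k : ℚ) * c k = ∑ d ∈ k.divisors.filter (fun d => Odd d),
        2 * ((ArithmeticFunction.moebius d : ℤ) : ℚ) * 2 ^ (k / d - 1) := by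
    intro k hk
    obtain ⟨hkd, hodd⟩ := Finset.mem_filter.mp hk
    obtain ⟨hkdvd, _⟩ := Nat.mem_divisors.mp hkd
    have hk0 : k ≠ 0 := by rintro rfl; exact hj0 (Nat.eq_zero_of_zero_dvd hkdvd)
    have hkQ : (k : ℚ) ≠ 0 := Nat.cast_ne_zero.mpr hk0
    rw [hc k (Nat.one_le_iff_ne_zero.mpr hk0), cCoeff, Finset.mul_sum, Finset.mul_sum]
    apply Finset.sum_congr rfl
    intro d _
    field_simp
  rw [Finset.sum_congr rfl hstep, Finset.sum_sigma']
  -- Step 2: reindex (k, d) ↦ (j/k*d, d)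
  rw [Finset.sum_nbij' (i := fun s => (⟨j / s.1 * s.2, s.2⟩ :
        Σ _ : ℕ, ℕ))
      (j := fun s => (⟨j / s.1 * s.2, s.2⟩ : Σ _ : ℕ, ℕ))
      (t := (j.divisors.filter (fun f => Odd f)).sigma (fun f => f.divisors))
      (g := fun s => 2 * ((ArithmeticFunction.moebius s.2 : ℤ) : ℚ) * 2 ^ (j / s.1 - 1))]
  · -- final Möbius computation
    rw [Finset.sum_sigma]
    rw [Finset.sum_eq_single 1]
    · simp only [Nat.divisors_one, Finset.sum_singleton]
      rw [ArithmeticFunction.moebius_apply_one, Nat.div_one]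
      push_cast
      conv_rhs => rw [show j = (j - 1) + 1 from by omega]
      rw [pow_succ]
      ring
    · intro f hf hf1
      calc ∑ d ∈ f.divisors, 2 * ((ArithmeticFunction.moebius d : ℤ) : ℚ) * 2 ^ (j / f - 1)
          = ∑ d ∈ f.divisors,
            ((ArithmeticFunction.moebius d : ℤ) : ℚ) * (2 * 2 ^ (j / f - 1)) := by
            apply Finset.sum_congr rfl; intro d _; ring
        _ = (∑ d ∈ f.divisors, ((ArithmeticFunction.moebius d : ℤ) : ℚ)) *
            (2 * 2 ^ (j / f - 1)) := by rw [Finset.sum_mul]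
        _ = 0 := by rw [moebius_sum_divisors, if_neg hf1, zero_mul]
    · intro h1
      exact absurd (Finset.mem_filter.mpr
        ⟨Nat.mem_divisors.mpr ⟨one_dvd j, hj0⟩, odd_one⟩) h1
  · -- hi : forward membership
    rintro ⟨k, d⟩ hkd
    obtain ⟨hk, hd⟩ := Finset.mem_sigma.mp hkd
    obtain ⟨hkdiv, hjkodd⟩ := Finset.mem_filter.mp hk
    obtain ⟨hkdvd, _⟩ := Nat.mem_divisors.mp hkdiv
    obtain ⟨hddiv, hdodd⟩ := Finset.mem_filter.mp hd
    obtain ⟨hddvd, hk0⟩ := Nat.mem_divisors.mp hddiv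
    have hfdvd : j / k * d ∣ j := by
      have : j / k * d ∣ j / k * k := mul_dvd_mul_left _ hddvd
      rwa [Nat.div_mul_cancel hkdvd] at this
    have hf0 : j / k * d ≠ 0 := by
      rintro h0
      rw [h0] at hfdvd
      exact hj0 (Nat.eq_zero_of_zero_dvd hfdvd)
    refine Finset.mem_sigma.mpr ⟨Finset.mem_filter.mpr
      ⟨Nat.mem_divisors.mpr ⟨hfdvd, hj0⟩, Nat.odd_mul.mpr ⟨hjkodd, hdodd⟩⟩,
      Nat.mem_divisors.mpr ⟨dvd_mul_left d (j / k), hf0⟩⟩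
  · -- hj : backward membership
    rintro ⟨f, d⟩ hfd
    obtain ⟨hf, hd⟩ := Finset.mem_sigma.mp hfd
    obtain ⟨hfdiv, hfodd⟩ := Finset.mem_filter.mp hf
    obtain ⟨hfdvd, _⟩ := Nat.mem_divisors.mp hfdiv
    obtain ⟨hddvd, hf0⟩ := Nat.mem_divisors.mp hd
    have hkdvd : j / f * d ∣ j := by
      have : j / f * d ∣ j / f * f := mul_dvd_mul_left _ hddvd
      rwa [Nat.div_mul_cancel hfdvd] at this
    have hk0 : j / f * d ≠ 0 := by
      rintro h0
      rw [h0] at hkdvd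
      exact hj0 (Nat.eq_zero_of_zero_dvd hkdvd)
    have hjk : j / (j / f * d) = f / d := divHelper hj0 hfdvd hddvd
    refine Finset.mem_sigma.mpr ⟨Finset.mem_filter.mpr
      ⟨Nat.mem_divisors.mpr ⟨hkdvd, hj0⟩, ?_⟩,
      Finset.mem_filter.mpr ⟨Nat.mem_divisors.mpr ⟨dvd_mul_left d (j / f), hk0⟩, ?_⟩⟩
    · rw [hjk]
      exact odd_of_dvd_odd (Nat.div_dvd_of_dvd hddvd) hfodd
    · obtain ⟨hddvd2, hf02⟩ := Nat.mem_divisors.mp hd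
      exact odd_of_dvd_odd hddvd2 hfodd
  · -- left_inv
    rintro ⟨k, d⟩ hkd
    obtain ⟨hk, hd⟩ := Finset.mem_sigma.mp hkd
    obtain ⟨hkdiv, _⟩ := Finset.mem_filter.mp hk
    obtain ⟨hkdvd, _⟩ := Nat.mem_divisors.mp hkdiv
    obtain ⟨hddiv, _⟩ := Finset.mem_filter.mp hd
    obtain ⟨hddvd, _⟩ := Nat.mem_divisors.mp hddiv
    have hX : j / (j / k * d) * d = k := by
      rw [divHelper hj0 hkdvd hddvd, Nat.div_mul_cancel hddvd]
    exact congrArg (fun x => (⟨x, d⟩ : Σ _ : ℕ, ℕ)) hX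
  · -- right_inv
    rintro ⟨f, d⟩ hfd
    obtain ⟨hf, hd⟩ := Finset.mem_sigma.mp hfd
    obtain ⟨hfdiv, _⟩ := Finset.mem_filter.mp hf
    obtain ⟨hfdvd, _⟩ := Nat.mem_divisors.mp hfdiv
    obtain ⟨hddvd, _⟩ := Nat.mem_divisors.mp hd
    have hX : j / (j / f * d) * d = f := by
      rw [divHelper hj0 hfdvd hddvd, Nat.div_mul_cancel hddvd]
    exact congrArg (fun x => (⟨x, d⟩ : Σ _ : ℕ, ℕ)) hX
  · -- value equality
    rintro ⟨k, d⟩ hkd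
    obtain ⟨hk, hd⟩ := Finset.mem_sigma.mp hkd
    obtain ⟨hkdiv, _⟩ := Finset.mem_filter.mp hk
    obtain ⟨hkdvd, _⟩ := Nat.mem_divisors.mp hkdiv
    obtain ⟨hddiv, _⟩ := Finset.mem_filter.mp hd
    obtain ⟨hddvd, _⟩ := Nat.mem_divisors.mp hddiv
    simp only
    rw [divHelper hj0 hkdvd hddvd]


open PowerSeries Finset

/-- geometric-type series `∑ X^{km}`. -/
noncomputable def geom (k : ℕ) : PowerSeries ℚ := PowerSeries.mk fun m => if k ∣ m then 1 else 0

lemma one_sub_X_pow_mul_geom {k : ℕ} (hk : 0 < k) :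
    ((1 : PowerSeries ℚ) - X ^ k) * geom k = 1 := by
  ext n
  rw [sub_mul, one_mul, map_sub, coeff_X_pow_mul' (geom k)]
  simp only [geom, coeff_mk, coeff_one]
  rcases Nat.eq_zero_or_pos n with rfl | hn
  · simp [hk.ne']
  · have h1 : ¬ n = 0 := hn.ne'
    by_cases hd : k ∣ n
    · have hkn : k ≤ n := Nat.le_of_dvd hn hd
      have : k ∣ n - k := (Nat.dvd_sub hd dvd_rfl)
      simp [hd, hkn, this, h1]
    · have hnd : ∀ (_ : k ≤ n), ¬ k ∣ n - k := by
        intro hkn hc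
        exact hd ((Nat.sub_add_cancel hkn) ▸ Nat.dvd_add hc dvd_rfl)
      by_cases hkn : k ≤ n
      · simp [hd, hkn, hnd hkn, h1]
      · simp [hd, hkn, h1]

lemma eq_inv_of_mul_eq_one {f g : PowerSeries ℚ} (h : f * g = 1) : g = f⁻¹ := by
  have hf : PowerSeries.constantCoeff f ≠ 0 := by
    intro h0
    have := congrArg (PowerSeries.constantCoeff) h
    simp [h0] at this
  calc g = (f⁻¹ * f) * g := by rw [PowerSeries.inv_mul_cancel f hf, one_mul]
  _ = f⁻¹ * (f * g) := by ring
  _ = f⁻¹ := by rw [h, mul_one]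

lemma inv_one_sub_X_pow {k : ℕ} (hk : 0 < k) :
    ((1 : PowerSeries ℚ) - X ^ k)⁻¹ = geom k :=
  (eq_inv_of_mul_eq_one (one_sub_X_pow_mul_geom hk)).symm

lemma coeff_inv_one_sub_two_X (n : ℕ) :
    PowerSeries.coeff n ((1 : PowerSeries ℚ) - 2 * X)⁻¹ = 2 ^ n := by
  have h : ((1 : PowerSeries ℚ) - 2 * X) * (PowerSeries.mk fun m => (2 : ℚ) ^ m) = 1 := by
    ext m
    rw [sub_mul, one_mul, map_sub, mul_assoc, coeff_one]
    rcases Nat.eq_zero_or_pos m with rfl | hm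
    · simp
    · obtain ⟨m, rfl⟩ := Nat.exists_eq_succ_of_ne_zero hm.ne'
      have h2 : PowerSeries.coeff (m + 1) ((2 : PowerSeries ℚ) * (X * PowerSeries.mk fun m => (2:ℚ)^m)) = 2 * 2 ^ m := by
        rw [show ((2 : PowerSeries ℚ)) = PowerSeries.C 2 by simp [map_ofNat], PowerSeries.coeff_C_mul,
          PowerSeries.coeff_succ_X_mul, PowerSeries.coeff_mk]
      rw [h2, PowerSeries.coeff_mk]
      simp [pow_succ]
      ring
  rw [← eq_inv_of_mul_eq_one h, coeff_mk]

/-- the log-derivative series of `(1+X^k)/(1-X^k)`. -/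
noncomputable def logd (k : ℕ) : PowerSeries ℚ :=
  ((2 * k : ℕ) : PowerSeries ℚ) * (X ^ (k - 1) * geom (2 * k))

lemma derivative_X_pow (k : ℕ) :
    d⁄dX ℚ ((X : PowerSeries ℚ) ^ k) = (k : PowerSeries ℚ) * X ^ (k - 1) := by
  rw [Derivation.leibniz_pow, derivative_X, smul_eq_mul, mul_one, nsmul_eq_mul]

lemma derivative_factor {k : ℕ} (hk : 1 ≤ k) :
    d⁄dX ℚ (((1 : PowerSeries ℚ) + X ^ k) * ((1 : PowerSeries ℚ) - X ^ k)⁻¹) =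
      (((1 : PowerSeries ℚ) + X ^ k) * ((1 : PowerSeries ℚ) - X ^ k)⁻¹) * logd k := by
  have hk0 : k ≠ 0 := by omega
  have hcu : PowerSeries.constantCoeff ((1 : PowerSeries ℚ) + X ^ k) ≠ 0 := by
    simp [zero_pow hk0]
  have hcv : PowerSeries.constantCoeff ((1 : PowerSeries ℚ) - X ^ k) ≠ 0 := by
    simp [zero_pow hk0]
  have hu : ((1 : PowerSeries ℚ) + X ^ k) * ((1 : PowerSeries ℚ) + X ^ k)⁻¹ = 1 :=
    PowerSeries.mul_inv_cancel _ hcu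
  have hv : ((1 : PowerSeries ℚ) - X ^ k) * ((1 : PowerSeries ℚ) - X ^ k)⁻¹ = 1 :=
    PowerSeries.mul_inv_cancel _ hcv
  have hgeom : geom (2 * k) =
      ((1 : PowerSeries ℚ) - X ^ k)⁻¹ * ((1 : PowerSeries ℚ) + X ^ k)⁻¹ := by
    rw [← inv_one_sub_X_pow (by positivity), show ((1 : PowerSeries ℚ) - X ^ (2 * k)) =
      ((1 : PowerSeries ℚ) + X ^ k) * ((1 : PowerSeries ℚ) - X ^ k) by
        rw [two_mul, pow_add]; ring, PowerSeries.mul_inv_rev]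
  rw [Derivation.leibniz, derivative_inv', smul_eq_mul, smul_eq_mul,
    map_sub, map_add, derivative_X_pow, Derivation.map_one_eq_zero, logd, hgeom]
  have hX : ((2 * k : ℕ) : PowerSeries ℚ) = 2 * (k : PowerSeries ℚ) := by push_cast; ring
  rw [hX]
  set A := ((1 : PowerSeries ℚ) - X ^ k)⁻¹ with hA
  set B := ((1 : PowerSeries ℚ) + X ^ k)⁻¹ with hB
  linear_combination (-( (k : PowerSeries ℚ) * X ^ (k-1) * A)) * hv +
    (-(2 * (k : PowerSeries ℚ) * X ^ (k-1) * A ^ 2)) * hu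

lemma derivative_pow_eq {f h : PowerSeries ℚ} (hf : d⁄dX ℚ f = f * h) (m : ℕ) :
    d⁄dX ℚ (f ^ m) = f ^ m * ((m : PowerSeries ℚ) * h) := by
  cases m with
  | zero => simp [Derivation.map_one_eq_zero]
  | succ m =>
    rw [Derivation.leibniz_pow, hf, smul_eq_mul, Nat.succ_sub_one, nsmul_eq_mul]
    push_cast
    ring

lemma derivative_prod_eq {s : Finset ℕ} {f h : ℕ → PowerSeries ℚ}
    (H : ∀ k ∈ s, d⁄dX ℚ (f k) = f k * h k) :
    d⁄dX ℚ (∏ k ∈ s, f k) = (∏ k ∈ s, f k) * ∑ k ∈ s, h k := by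
  induction s using Finset.cons_induction with
  | empty => simp [Derivation.map_one_eq_zero]
  | cons a s ha ih =>
    rw [Finset.prod_cons, Finset.sum_cons, Derivation.leibniz, smul_eq_mul, smul_eq_mul,
      ih (fun k hk => H k (Finset.mem_cons_of_mem hk)), H a (Finset.mem_cons_self a s)]
    ring

lemma coeff_logd {k : ℕ} (hk : 1 ≤ k) (q : ℕ) :
    PowerSeries.coeff q (logd k) =
      if k ∣ (q + 1) ∧ Odd ((q + 1) / k) then (2 * k : ℚ) else 0 := by
  have hk0 : 0 < k := hk
  rw [logd, show ((2 * k : ℕ) : PowerSeries ℚ) = PowerSeries.C ((2 * k : ℕ) : ℚ) from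
    (map_natCast (PowerSeries.C) (2 * k)).symm, PowerSeries.coeff_C_mul,
    PowerSeries.coeff_X_pow_mul']
  simp only [geom, PowerSeries.coeff_mk]
  by_cases hcond : k ∣ (q + 1) ∧ Odd ((q + 1) / k)
  · obtain ⟨⟨t, ht⟩, hodd⟩ := hcond
    have htodd : Odd t := by
      rwa [ht, Nat.mul_div_cancel_left t hk0] at hodd
    obtain ⟨m, hm⟩ := htodd
    have hq1 : q + 1 = k * (2 * m + 1) := by rw [ht, hm]
    obtain ⟨P, hPe⟩ : ∃ P, k * m = P := ⟨_, rfl⟩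
    have hq2 : q + 1 = 2 * P + k := by rw [hq1, ← hPe]; ring
    have hle : k - 1 ≤ q := by omega
    have hsub : q - (k - 1) = 2 * P := by omega
    have hdvd : 2 * k ∣ q - (k - 1) := ⟨m, by rw [hsub, ← hPe]; ring⟩
    rw [if_pos hle, if_pos hdvd, if_pos (⟨⟨t, ht⟩, hodd⟩ : k ∣ (q+1) ∧ Odd ((q+1)/k))]
    push_cast
    ring
  · rw [if_neg hcond]
    by_cases hle : k - 1 ≤ q
    · rw [if_pos hle]
      by_cases hdvd : 2 * k ∣ q - (k - 1)
      · exfalso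
        obtain ⟨m, hm⟩ := hdvd
        obtain ⟨P, hPe⟩ : ∃ P, k * m = P := ⟨_, rfl⟩
        have hm2 : q - (k - 1) = 2 * P := by rw [hm, ← hPe]; ring
        have hq1 : q + 1 = 2 * P + k := by omega
        have hq2 : q + 1 = k * (2 * m + 1) := by rw [hq1, ← hPe]; ring
        refine hcond ⟨⟨2 * m + 1, hq2⟩, ?_⟩
        rw [hq2, Nat.mul_div_cancel_left _ hk0]
        exact ⟨m, by omega⟩
      · rw [if_neg hdvd, mul_zero]
    · rw [if_neg hle, mul_zero]

lemma constCoeff_prod {c : ℕ → ℕ} (N : ℕ) :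
    PowerSeries.constantCoeff (∏ k ∈ Finset.Icc 1 N,
      (((1 : PowerSeries ℚ) + X ^ k) * ((1 : PowerSeries ℚ) - X ^ k)⁻¹) ^ c k) = 1 := by
  rw [map_prod]
  apply Finset.prod_eq_one
  intro k hk
  have hk1 : 1 ≤ k := (Finset.mem_Icc.mp hk).1
  have hk0 : k ≠ 0 := by omega
  rw [map_pow, map_mul, PowerSeries.constantCoeff_inv]
  simp [zero_pow hk0]

lemma main_coeff (c : ℕ → ℕ) (hc : ∀ k, 1 ≤ k → (c k : ℚ) = cCoeff k) :
    ∀ n N, n ≤ N → PowerSeries.coeff n (∏ k ∈ Finset.Icc 1 N,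
      (((1 : PowerSeries ℚ) + X ^ k) * ((1 : PowerSeries ℚ) - X ^ k)⁻¹) ^ c k) = 2 ^ n := by
  intro n
  induction n using Nat.strong_induction_on with
  | _ n IH =>
    intro N hnN
    match n with
    | 0 => rw [PowerSeries.coeff_zero_eq_constantCoeff, constCoeff_prod, pow_zero]
    | (m + 1) =>
      set F : PowerSeries ℚ := ∏ k ∈ Finset.Icc 1 N,
        (((1 : PowerSeries ℚ) + X ^ k) * ((1 : PowerSeries ℚ) - X ^ k)⁻¹) ^ c k with hF
      set H : PowerSeries ℚ := ∑ k ∈ Finset.Icc 1 N,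
        ((c k : ℕ) : PowerSeries ℚ) * logd k with hH
      have hD : d⁄dX ℚ F = F * H := by
        apply derivative_prod_eq
        intro k hk
        exact derivative_pow_eq (derivative_factor (Finset.mem_Icc.mp hk).1) (c k)
      -- coefficient of H
      have hHq : ∀ q : ℕ, q ≤ m → PowerSeries.coeff q H = 2 ^ (q + 1) := by
        intro q hq
        rw [hH, map_sum]
        have hterm : ∀ k ∈ Finset.Icc 1 N,
            PowerSeries.coeff q (((c k : ℕ) : PowerSeries ℚ) * logd k) =
              if k ∣ (q + 1) ∧ Odd ((q + 1) / k) then 2 * (k : ℚ) * (c k) else 0 := by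
          intro k hk
          rw [show ((c k : ℕ) : PowerSeries ℚ) = PowerSeries.C ((c k : ℕ) : ℚ) from
            (map_natCast (PowerSeries.C) (c k)).symm, PowerSeries.coeff_C_mul,
            coeff_logd (Finset.mem_Icc.mp hk).1, mul_ite, mul_zero]
          split_ifs with h
          · ring
          · rfl
        rw [Finset.sum_congr rfl hterm, Finset.sum_ite, Finset.sum_const_zero, add_zero]
        have hset : (Finset.Icc 1 N).filter (fun k => k ∣ (q + 1) ∧ Odd ((q + 1) / k)) =
            (q + 1).divisors.filter (fun k => Odd ((q + 1) / k)) := by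
          ext k
          simp only [Finset.mem_filter, Finset.mem_Icc, Nat.mem_divisors]
          constructor
          · rintro ⟨⟨hk1, _⟩, hdvd, hodd⟩
            exact ⟨⟨hdvd, by omega⟩, hodd⟩
          · rintro ⟨⟨hdvd, _⟩, hodd⟩
            have hk0 : k ≠ 0 := by rintro rfl; simp at hdvd
            have hkle : k ≤ q + 1 := Nat.le_of_dvd (by omega) hdvd
            exact ⟨⟨by omega, by omega⟩, hdvd, hodd⟩
        rw [hset]
        exact L1 c hc (by omega)
      -- coefficient extraction
      have hder : PowerSeries.coeff m (d⁄dX ℚ F) =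
          PowerSeries.coeff (m + 1) F * (m + 1) := PowerSeries.coeff_derivative F m
      rw [hD] at hder
      rw [PowerSeries.coeff_mul] at hder
      have hsum : ∑ p ∈ Finset.HasAntidiagonal.antidiagonal m,
          PowerSeries.coeff p.1 F * PowerSeries.coeff p.2 H =
          ∑ p ∈ Finset.HasAntidiagonal.antidiagonal m, (2 : ℚ) ^ (m + 1) := by
        apply Finset.sum_congr rfl
        rintro ⟨p, q⟩ hpq
        have hpq' : p + q = m := Finset.HasAntidiagonal.mem_antidiagonal.mp hpq
        have hp : PowerSeries.coeff p F = 2 ^ p := IH p (by omega) N (by omega)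
        have hq : PowerSeries.coeff q H = 2 ^ (q + 1) := hHq q (by omega)
        rw [hp, hq, ← pow_add]
        congr 1
        omega
      rw [hsum, Finset.sum_const, Finset.Nat.card_antidiagonal, nsmul_eq_mul] at hder
      have hm1 : ((m + 1 : ℕ) : ℚ) ≠ 0 := by positivity
      have := hder.symm
      field_simp at this
      -- this : coeff (m+1) F * (m+1) = (m+1) * 2^(m+1)
      have hgoal : PowerSeries.coeff (m + 1) F = 2 ^ (m + 1) := by
        have h2 : PowerSeries.coeff (m + 1) F * ((m : ℚ) + 1) =
            2 ^ (m + 1) * ((m : ℚ) + 1) := by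
          rw [this]; push_cast; ring
        exact mul_right_cancel₀ (by positivity) h2
      exact hgoal

open PowerSeries in
/-- The identity `∏_k ((1+t^k)/(1-t^k))^(c_k) = 1/(1-2t)` of formal power
series over `ℚ`, stated coefficientwise: factors with `k > n` do not affect
the coefficient of `t^n`, so the product may be truncated at `n`. -/
theorem prod_identity (c : ℕ → ℕ) (hc : ∀ k, 1 ≤ k → (c k : ℚ) = cCoeff k) (n : ℕ) :
    PowerSeries.coeff (R := ℚ) n
        (∏ k ∈ Finset.Icc 1 n,
          (((1 : PowerSeries ℚ) + X ^ k) * ((1 : PowerSeries ℚ) - X ^ k)⁻¹) ^ c k) =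
      PowerSeries.coeff (R := ℚ) n ((1 : PowerSeries ℚ) - 2 * X)⁻¹ := by
  rw [main_coeff c hc n n le_rfl, coeff_inv_one_sub_two_X]
end

section
/- Taking logarithms, the identity Σ_{k≥1} c_k · Σ_{j≥1, j odd} (2/j) t^{kj} = Σ_{m≥1} (2^m/m) t^m holds, where c_k = (1/k) Σ_{d|k, d odd} μ(d) 2^(k/d - 1); equivalently, for every m ≥ 1, Σ_{k·j = m, j odd} (2 c_k)/j = 2^m/m. -/
open Finset ArithmeticFunction in
lemma key_sum (m : ℕ) (hm : 1 ≤ m) :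
    ∑ j ∈ m.divisors.filter (fun j => Odd j),
      ∑ d ∈ (m / j).divisors.filter (fun d => Odd d),
        (ArithmeticFunction.moebius d : ℚ) * 2 ^ (m / j / d - 1) =
      2 ^ (m - 1) := by
  have hm0 : m ≠ 0 := by omega
  rw [Finset.sum_sigma']
  have step1 :
      ∑ x ∈ (m.divisors.filter (fun j => Odd j)).sigma
          (fun j => (m / j).divisors.filter (fun d => Odd d)),
        (ArithmeticFunction.moebius x.2 : ℚ) * 2 ^ (m / x.1 / x.2 - 1) =
      ∑ x ∈ (m.divisors.filter (fun e => Odd e)).sigma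
          (fun e => e.divisors),
        (ArithmeticFunction.moebius x.2 : ℚ) * 2 ^ (m / x.1 - 1) := by
    apply Finset.sum_nbij' (fun x => ⟨x.1 * x.2, x.2⟩) (fun x => ⟨x.1 / x.2, x.2⟩)
    · rintro ⟨j, d⟩ hx
      simp only [Finset.mem_sigma, Finset.mem_filter, Nat.mem_divisors] at hx ⊢
      obtain ⟨⟨⟨hjm, _⟩, hj⟩, ⟨hd, hd0⟩, hdo⟩ := hx
      have hj0 : j ≠ 0 := by rintro rfl; exact hm0 (Nat.eq_zero_of_zero_dvd hjm)
      have hd0' : d ≠ 0 := by rintro rfl; exact hd0 (Nat.eq_zero_of_zero_dvd hd)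
      exact ⟨⟨⟨(Nat.dvd_div_iff_mul_dvd hjm).mp hd, hm0⟩, hj.mul hdo⟩,
        Dvd.intro_left j rfl, Nat.mul_ne_zero hj0 hd0'⟩
    · rintro ⟨e, d⟩ hx
      simp only [Finset.mem_sigma, Finset.mem_filter, Nat.mem_divisors] at hx ⊢
      obtain ⟨⟨⟨hem, _⟩, he⟩, hde, he0⟩ := hx
      have hd0 : d ≠ 0 := by rintro rfl; exact he0 (Nat.eq_zero_of_zero_dvd hde)
      have hed : e / d ∣ m := dvd_trans (Nat.div_dvd_of_dvd hde) hem
      have hed0 : e / d ≠ 0 := by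
        intro h
        apply he0
        rw [← Nat.div_mul_cancel hde, h, zero_mul]
      refine ⟨⟨⟨hed, hm0⟩, Odd.of_dvd_nat he (Nat.div_dvd_of_dvd hde)⟩,
        ⟨?_, ?_⟩, Odd.of_dvd_nat he hde⟩
      · refine (Nat.dvd_div_iff_mul_dvd hed).mpr ?_
        rw [Nat.div_mul_cancel hde]; exact hem
      · intro h
        rw [Nat.div_eq_zero_iff] at h
        exact absurd (Nat.le_of_dvd (Nat.pos_of_ne_zero hm0) hed) (by omega)
    · rintro ⟨j, d⟩ hx
      simp only [Finset.mem_sigma, Finset.mem_filter, Nat.mem_divisors] at hx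
      obtain ⟨⟨⟨hjm, _⟩, hj⟩, ⟨hd, hd0⟩, hdo⟩ := hx
      have hd0' : d ≠ 0 := by
        rintro rfl; exact hd0 (Nat.eq_zero_of_zero_dvd hd)
      simp [Nat.mul_div_cancel _ (Nat.pos_of_ne_zero hd0')]
    · rintro ⟨e, d⟩ hx
      simp only [Finset.mem_sigma, Finset.mem_filter, Nat.mem_divisors] at hx
      obtain ⟨⟨⟨hem, _⟩, he⟩, hde, he0⟩ := hx
      simp [Nat.div_mul_cancel hde]
    · rintro ⟨j, d⟩ hx
      simp [Nat.div_div_eq_div_mul]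
  rw [step1, Finset.sum_sigma]
  have step2 : ∀ e ∈ m.divisors.filter (fun e => Odd e),
      ∑ d ∈ e.divisors, (ArithmeticFunction.moebius d : ℚ) * 2 ^ (m / e - 1) =
      if e = 1 then (2 : ℚ) ^ (m - 1) else 0 := by
    intro e _
    rw [← Finset.sum_mul]
    have hcast : ∑ d ∈ e.divisors, (ArithmeticFunction.moebius d : ℚ) =
        ((∑ d ∈ e.divisors, ArithmeticFunction.moebius d : ℤ) : ℚ) := by
      push_cast; ring
    rw [hcast]
    have h2 : (∑ d ∈ e.divisors, ArithmeticFunction.moebius d : ℤ) =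
        if e = 1 then 1 else 0 := by
      have := ArithmeticFunction.coe_mul_zeta_apply
        (f := (ArithmeticFunction.moebius : ArithmeticFunction ℤ)) (x := e)
      rw [ArithmeticFunction.moebius_mul_coe_zeta, ArithmeticFunction.one_apply] at this
      exact this.symm
    rw [h2]
    split <;> simp_all
  rw [Finset.sum_congr rfl step2, Finset.sum_ite_eq' _ 1]
  have h1 : (1 : ℕ) ∈ m.divisors.filter (fun e => Odd e) := by
    simp [Nat.mem_divisors, hm0, odd_one]
  simp [h1]

/-- Coefficientwise form of `∏_k ((1+t^k)/(1-t^k))^(c_k) = 1/(1-2t)`: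
for every `m ≥ 1`, `Σ_{kj = m, j odd} 2 c_k / j = 2^m / m`. -/
theorem log_identity (m : ℕ) (hm : 1 ≤ m) :
    ∑ j ∈ m.divisors.filter (fun j => Odd j), 2 * cCoeff (m / j) / j =
      2 ^ m / m := by
  have hm0 : m ≠ 0 := by omega
  have hstep : ∀ j ∈ m.divisors.filter (fun j => Odd j),
      2 * cCoeff (m / j) / j =
      (2 / m) * ∑ d ∈ (m / j).divisors.filter (fun d => Odd d),
        (ArithmeticFunction.moebius d : ℚ) * 2 ^ (m / j / d - 1) := by
    intro j hj
    simp only [Finset.mem_filter, Nat.mem_divisors] at hj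
    obtain ⟨⟨hjm, _⟩, _⟩ := hj
    have hj0 : j ≠ 0 := by rintro rfl; exact hm0 (Nat.eq_zero_of_zero_dvd hjm)
    have hk0 : m / j ≠ 0 := by
      intro h; rw [Nat.div_eq_zero_iff] at h
      exact absurd (Nat.le_of_dvd (Nat.pos_of_ne_zero hm0) hjm) (by omega)
    have hjk : (j : ℚ) * ((m / j : ℕ) : ℚ) = (m : ℚ) := by
      rw [← Nat.cast_mul, Nat.mul_div_cancel' hjm]
    have hjQ : (j : ℚ) ≠ 0 := Nat.cast_ne_zero.mpr hj0
    have hkQ : ((m / j : ℕ) : ℚ) ≠ 0 := Nat.cast_ne_zero.mpr hk0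
    have hmQ : (m : ℚ) ≠ 0 := Nat.cast_ne_zero.mpr hm0
    rw [cCoeff]
    field_simp
    rw [← hjk]; ring
  rw [Finset.sum_congr rfl hstep, ← Finset.mul_sum, key_sum m hm]
  have h2 : (2 : ℚ) ^ m = 2 * 2 ^ (m - 1) := by
    rw [← pow_succ']; congr 1; omega
  rw [h2]; ring
end

section
/- In the free Lie algebra (or any associative algebra) on generators x_1,...,x_n, the iterated bracket [x_1,[x_2,[...,[x_{n-1},x_n]...]]] equals Σ_{σ ∈ U_n} ν(σ) x_{σ(1)} x_{σ(2)} ··· x_{σ(n)}, where ν(σ) = (-1)^k if the descent composition of σ is (n-k, 1^k). -/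
/-- The descent set: positions `i` (0-indexed, with `i+1 < n`) with `σ i > σ (i+1)`. -/
def descents {n : ℕ} (σ : Equiv.Perm (Fin n)) : Finset (Fin n) :=
  Finset.univ.filter (fun i => ∃ j : Fin n, (j : ℕ) = (i : ℕ) + 1 ∧ σ j < σ i)

/-- The number of descents. -/
def desNum {n : ℕ} (σ : Equiv.Perm (Fin n)) : ℕ := (descents σ).card

/-- The iterated Lie bracket `[a₁,[a₂,[…,[a_(n-1),a_n]…]]]` in an associative ring. -/
def iterBracket {A : Type*} [Ring A] : List A → A
  | [] => 0
  | [a] => a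
  | a :: l => a * iterBracket l - iterBracket l * a

/-! ### Auxiliary machinery -/

theorem Equiv.Perm.apply_inv_self {α : Type*} (f : Equiv.Perm α) (x : α) : f (f⁻¹ x) = x :=
  Equiv.apply_symm_apply f x

theorem Equiv.Perm.inv_apply_self {α : Type*} (f : Equiv.Perm α) (x : α) : f⁻¹ (f x) = x :=
  Equiv.symm_apply_apply f x

section Aux

variable {N : ℕ}

lemma card_compl_add_card' (S : Finset (Fin N)) : Sᶜ.card + S.card = N := by
  rw [add_comm, Finset.card_add_card_compl, Fintype.card_fin]

lemma sort_strict {s : Finset (Fin N)} {i j : ℕ} (hi : i < s.card) (hj : j < s.card)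
    (hij : i < j) :
    (s.sort (· ≤ ·))[i]'(by rwa [Finset.length_sort]) <
      (s.sort (· ≤ ·))[j]'(by rwa [Finset.length_sort]) := by
  have := List.pairwise_iff_get.mp (List.sortedLT_iff_pairwise.mp (Finset.sortedLT_sort s))
  have h := this ⟨i, by rwa [Finset.length_sort]⟩ ⟨j, by rwa [Finset.length_sort]⟩
    (by simpa using hij)
  simpa [List.get_eq_getElem] using h

lemma rev_sort_strict {s : Finset (Fin N)} {i j : ℕ} (hi : i < s.card) (hj : j < s.card)
    (hij : i < j) :
    ((s.sort (· ≤ ·)).reverse)[j]'(by simpa using hj) <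
      ((s.sort (· ≤ ·)).reverse)[i]'(by simpa using hi) := by
  rw [List.getElem_reverse, List.getElem_reverse]
  simp only [Finset.length_sort]
  exact sort_strict (by omega) (by omega) (by omega)

/-- The list: complement sorted ascending, then `S` sorted descending. -/
def ulist (S : Finset (Fin N)) : List (Fin N) :=
  Sᶜ.sort (· ≤ ·) ++ (S.sort (· ≤ ·)).reverse

lemma ulist_length (S : Finset (Fin N)) : (ulist S).length = N := by
  simp only [ulist, List.length_append, List.length_reverse, Finset.length_sort]
  exact card_compl_add_card' S

lemma ulist_nodup (S : Finset (Fin N)) : (ulist S).Nodup := by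
  refine List.Nodup.append (Finset.sort_nodup _ _)
    (List.nodup_reverse.mpr (Finset.sort_nodup _ _)) ?_
  intro a ha hb
  rw [Finset.mem_sort] at ha
  rw [List.mem_reverse, Finset.mem_sort] at hb
  exact (Finset.mem_compl.mp ha) hb

/-- The unimodal permutation associated to a subset `S`. -/
noncomputable def uperm (S : Finset (Fin N)) : Equiv.Perm (Fin N) :=
  Equiv.ofBijective (fun i => (ulist S).get (Fin.cast (ulist_length S).symm i))
    (Finite.injective_iff_bijective.mp
      (((List.nodup_iff_injective_get).mp (ulist_nodup S)).comp (Fin.cast_injective _)))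

lemma uperm_apply (S : Finset (Fin N)) (i : Fin N) :
    uperm S i = (ulist S)[(i : ℕ)]'(by rw [ulist_length]; exact i.2) := rfl

lemma ofFn_uperm (S : Finset (Fin N)) : List.ofFn (uperm S) = ulist S := by
  refine List.ext_getElem (by simp [ulist_length]) fun n h1 h2 => ?_
  rw [List.getElem_ofFn, uperm_apply]

lemma uperm_eq_left {S : Finset (Fin N)} {i : Fin N} (h : (i : ℕ) < Sᶜ.card) :
    uperm S i = (Sᶜ.sort (· ≤ ·))[(i : ℕ)]'(by rwa [Finset.length_sort]) := by
  rw [uperm_apply]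
  simp only [ulist]
  rw [List.getElem_append_left (by rwa [Finset.length_sort])]

lemma uperm_eq_right {S : Finset (Fin N)} {i : Fin N} (h : Sᶜ.card ≤ (i : ℕ)) :
    uperm S i = ((S.sort (· ≤ ·)).reverse)[(i : ℕ) - Sᶜ.card]'(by
      simp only [List.length_reverse, Finset.length_sort]
      have := i.2
      have := card_compl_add_card' S
      omega) := by
  rw [uperm_apply]
  simp only [ulist]
  rw [List.getElem_append_right (by rwa [Finset.length_sort])]
  simp

lemma uperm_mem_compl {S : Finset (Fin N)} {i : Fin N} (h : (i : ℕ) < Sᶜ.card) :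
    uperm S i ∈ Sᶜ := by
  rw [uperm_eq_left h]
  exact (Finset.mem_sort _).mp (List.getElem_mem _)

lemma uperm_mem {S : Finset (Fin N)} {i : Fin N} (h : Sᶜ.card ≤ (i : ℕ)) :
    uperm S i ∈ S := by
  rw [uperm_eq_right h]
  have := List.getElem_mem (l := (S.sort (· ≤ ·)).reverse) (n := (i : ℕ) - Sᶜ.card)
    (by
      simp only [List.length_reverse, Finset.length_sort]
      have := i.2
      have := card_compl_add_card' S
      omega)
  rw [List.mem_reverse, Finset.mem_sort] at this
  exact this

lemma uperm_mem_iff {S : Finset (Fin N)} {i : Fin N} :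
    uperm S i ∈ S ↔ Sᶜ.card ≤ (i : ℕ) := by
  constructor
  · intro h
    by_contra hc
    push_neg at hc
    exact (Finset.mem_compl.mp (uperm_mem_compl hc)) h
  · exact uperm_mem

end Aux

section Peak

variable {n : ℕ}

lemma sort_getElem_last {S : Finset (Fin (n + 1))} (hl : Fin.last n ∈ S) {i : ℕ}
    (h : i < (S.sort (· ≤ ·)).length) (hi : i + 1 = S.card) :
    (S.sort (· ≤ ·))[i]'h = Fin.last n := by
  refine le_antisymm (Fin.le_last _) ?_
  obtain ⟨j, hj, hje⟩ := List.mem_iff_getElem.mp ((Finset.mem_sort (α := Fin (n+1)) (· ≤ ·)).mpr hl)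
  have hjlt : j < S.card := by rwa [Finset.length_sort] at hj
  rcases Nat.lt_or_ge j i with hcase | hcase
  · exact (hje.symm.trans_lt (sort_strict hjlt (by omega) hcase)).le
  · have : j = i := by omega
    subst this
    exact hje.ge

lemma compl_card_pos {S : Finset (Fin (n + 1))} (hl : Fin.last n ∉ S) : 1 ≤ Sᶜ.card :=
  Finset.card_pos.mpr ⟨Fin.last n, Finset.mem_compl.mpr hl⟩

lemma compl_card_le (S : Finset (Fin (n + 1))) : Sᶜ.card ≤ n + 1 := by
  have := card_compl_add_card' S; omega

/-- The peak position of `uperm S`. -/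
noncomputable def upeak (S : Finset (Fin (n + 1))) : Fin (n + 1) :=
  ⟨Sᶜ.card - 1, by have := compl_card_le S; omega⟩

lemma uperm_peak {S : Finset (Fin (n + 1))} (hl : Fin.last n ∉ S) :
    uperm S (upeak S) = Fin.last n := by
  have hk := compl_card_pos hl
  rw [uperm_eq_left (by show Sᶜ.card - 1 < Sᶜ.card; omega)]
  exact sort_getElem_last (Finset.mem_compl.mpr hl) _ (by show Sᶜ.card - 1 + 1 = Sᶜ.card; omega)

lemma uperm_symm_last {S : Finset (Fin (n + 1))} (hl : Fin.last n ∉ S) :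
    (uperm S)⁻¹ (Fin.last n) = upeak S := by
  have h := uperm_peak hl
  exact (Equiv.symm_apply_eq _).mpr h.symm

lemma uperm_unimodal {S : Finset (Fin (n + 1))} (hl : Fin.last n ∉ S) :
    Unimodal (uperm S) := by
  have hk := compl_card_pos hl
  have hkle := compl_card_le S
  refine ⟨upeak S, ?_, ?_⟩
  · intro i hi j hj hij
    have hii : (i : ℕ) ≤ Sᶜ.card - 1 := hi
    have hjj : (j : ℕ) ≤ Sᶜ.card - 1 := hj
    have hi' : (i : ℕ) < Sᶜ.card := by omega
    have hj' : (j : ℕ) < Sᶜ.card := by omega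
    rw [uperm_eq_left hi', uperm_eq_left hj']
    exact sort_strict hi' hj' hij
  · intro i hi j hj hij
    have hii : Sᶜ.card - 1 ≤ (i : ℕ) := hi
    have hij' : (i : ℕ) < (j : ℕ) := hij
    have hj' : Sᶜ.card ≤ (j : ℕ) := by omega
    rcases Nat.lt_or_ge (i : ℕ) Sᶜ.card with hi' | hi'
    · have hieq : i = upeak S := by
        apply Fin.ext
        show (i : ℕ) = Sᶜ.card - 1
        omega
      subst hieq
      rw [uperm_peak hl]
      have hjS : uperm S j ∈ S := uperm_mem hj'
      have hne : uperm S j ≠ Fin.last n := fun h => hl (h ▸ hjS)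
      exact Fin.lt_last_iff_ne_last.mpr hne
    · rw [uperm_eq_right hi', uperm_eq_right hj']
      have hcc := card_compl_add_card' S
      exact rev_sort_strict (by have := j.2; omega) (by have := i.2; omega) (by omega)

end Peak

section ToSet

variable {n : ℕ}

/-- The set of values appearing after the peak. -/
def toSet (σ : Equiv.Perm (Fin (n + 1))) : Finset (Fin (n + 1)) :=
  Finset.univ.filter (fun v => σ⁻¹ (Fin.last n) < σ⁻¹ v)

lemma mem_toSet {σ : Equiv.Perm (Fin (n + 1))} {v : Fin (n + 1)} :
    v ∈ toSet σ ↔ σ⁻¹ (Fin.last n) < σ⁻¹ v := by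
  simp [toSet]

lemma last_not_mem_toSet (σ : Equiv.Perm (Fin (n + 1))) : Fin.last n ∉ toSet σ := by
  simp [toSet]

lemma toSet_uperm {S : Finset (Fin (n + 1))} (hl : Fin.last n ∉ S) : toSet (uperm S) = S := by
  have hk := compl_card_pos hl
  ext v
  rw [mem_toSet, uperm_symm_last hl]
  constructor
  · intro h
    have h1 : (Sᶜ.card - 1 : ℕ) < ((uperm S)⁻¹ v : ℕ) := h
    have h' : Sᶜ.card ≤ ((uperm S)⁻¹ v : ℕ) := by omega
    have hmem := uperm_mem h'
    rwa [Equiv.Perm.apply_inv_self] at hmem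
  · intro hv
    have hmem : uperm S ((uperm S)⁻¹ v) ∈ S := by rwa [Equiv.Perm.apply_inv_self]
    have h' := uperm_mem_iff.mp hmem
    show (Sᶜ.card - 1 : ℕ) < ((uperm S)⁻¹ v : ℕ)
    omega

lemma unimodal_symm_last {σ : Equiv.Perm (Fin (n + 1))} (h : Unimodal σ) :
    StrictMonoOn σ {i | i ≤ σ⁻¹ (Fin.last n)} ∧ StrictAntiOn σ {i | σ⁻¹ (Fin.last n) ≤ i} := by
  obtain ⟨m, h1, h2⟩ := h
  have hm : σ m = Fin.last n := by
    refine le_antisymm (Fin.le_last _) ?_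
    have happ : σ (σ⁻¹ (Fin.last n)) = Fin.last n := Equiv.Perm.apply_inv_self σ _
    rcases lt_trichotomy (σ⁻¹ (Fin.last n)) m with hc | hc | hc
    · have hlt := h1 (Set.mem_setOf.mpr hc.le) (Set.mem_setOf.mpr (le_refl m)) hc
      rw [happ] at hlt
      exact hlt.le
    · rw [← happ, hc]
    · have hlt := h2 (Set.mem_setOf.mpr (le_refl m)) (Set.mem_setOf.mpr hc.le) hc
      rw [happ] at hlt
      exact hlt.le
  have hminv : m = σ⁻¹ (Fin.last n) := by rw [← hm, Equiv.Perm.inv_apply_self]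
  rw [← hminv]
  exact ⟨h1, h2⟩

lemma descents_unimodal {σ : Equiv.Perm (Fin (n + 1))} (h : Unimodal σ) :
    descents σ = Finset.Ico (σ⁻¹ (Fin.last n)) (Fin.last n) := by
  obtain ⟨h1, h2⟩ := unimodal_symm_last h
  ext i
  simp only [descents, Finset.mem_filter, Finset.mem_univ, true_and, Finset.mem_Ico]
  constructor
  · rintro ⟨j, hj1, hj2⟩
    have hjn : (i : ℕ) + 1 < n + 1 := hj1 ▸ j.2
    constructor
    · by_contra hmi
      push_neg at hmi
      have hmi' : (i : ℕ) < (σ⁻¹ (Fin.last n) : ℕ) := hmi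
      have hj_le : j ≤ σ⁻¹ (Fin.last n) := by
        show (j : ℕ) ≤ _
        omega
      have hlt := h1 (Set.mem_setOf.mpr hmi.le) (Set.mem_setOf.mpr hj_le)
        (show i < j by show (i : ℕ) < (j : ℕ); omega)
      exact absurd hj2 (not_lt.mpr hlt.le)
    · show (i : ℕ) < n
      omega
  · rintro ⟨hmi, hin⟩
    have hin' : (i : ℕ) < n := hin
    refine ⟨⟨(i : ℕ) + 1, by omega⟩, rfl, ?_⟩
    refine h2 (Set.mem_setOf.mpr hmi) (Set.mem_setOf.mpr ?_) ?_
    · refine le_trans hmi ?_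
      show (i : ℕ) ≤ (i : ℕ) + 1
      omega
    · show (i : ℕ) < (i : ℕ) + 1
      omega

lemma desNum_unimodal {σ : Equiv.Perm (Fin (n + 1))} (h : Unimodal σ) :
    desNum σ = n - (σ⁻¹ (Fin.last n) : ℕ) := by
  rw [desNum, descents_unimodal h, Fin.card_Ico, Fin.val_last]

lemma card_toSet (σ : Equiv.Perm (Fin (n + 1))) :
    (toSet σ).card = n - (σ⁻¹ (Fin.last n) : ℕ) := by
  have himg : toSet σ = (Finset.Ioi (σ⁻¹ (Fin.last n))).image σ := by
    ext v
    simp only [mem_toSet, Finset.mem_image, Finset.mem_Ioi]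
    constructor
    · intro hv
      exact ⟨σ⁻¹ v, hv, Equiv.Perm.apply_inv_self σ v⟩
    · rintro ⟨p, hp, rfl⟩
      rwa [Equiv.Perm.inv_apply_self]
  rw [himg, Finset.card_image_of_injective _ σ.injective, Fin.card_Ioi]
  omega

end ToSet

section Reconstruct

variable {n : ℕ}

lemma ofFn_eq_ulist {σ : Equiv.Perm (Fin (n + 1))} (h : Unimodal σ) :
    List.ofFn σ = ulist (toSet σ) := by
  obtain ⟨h1, h2⟩ := unimodal_symm_last h
  set L : List (Fin (n + 1)) := List.ofFn σ with hL
  have hlen : L.length = n + 1 := by simp [hL]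
  have hmn : ((σ⁻¹ (Fin.last n) : Fin (n + 1)) : ℕ) < n + 1 := (σ⁻¹ (Fin.last n)).2
  set m : ℕ := ((σ⁻¹ (Fin.last n) : Fin (n + 1)) : ℕ) with hm
  have hnodup : L.Nodup := List.nodup_ofFn.mpr σ.injective
  have hgetL : ∀ (a : ℕ) (ha : a < L.length), L[a] = σ ⟨a, by rw [hlen] at ha; exact ha⟩ := by
    intro a ha
    simp only [hL, List.getElem_ofFn]
  -- the ascending part
  have hlent : (L.take (m + 1)).length = m + 1 := by
    rw [List.length_take, hlen]
    omega
  have htake : L.take (m + 1) = (toSet σ)ᶜ.sort (· ≤ ·) := by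
    have hnd : (L.take (m + 1)).Nodup := (List.take_sublist _ _).nodup hnodup
    have hsorted : (L.take (m + 1)).Pairwise (· ≤ ·) := by
      rw [List.pairwise_iff_get]
      intro a b hab
      have ha : (a : ℕ) < m + 1 := lt_of_lt_of_eq a.2 hlent
      have hb : (b : ℕ) < m + 1 := lt_of_lt_of_eq b.2 hlent
      simp only [List.get_eq_getElem, List.getElem_take]
      rw [hgetL, hgetL]
      refine (h1 ?_ ?_ ?_).le
      · show (a : ℕ) ≤ m
        omega
      · show (b : ℕ) ≤ m
        omega
      · show (a : ℕ) < (b : ℕ)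
        exact hab
    have htf : (L.take (m + 1)).toFinset = (toSet σ)ᶜ := by
      ext v
      simp only [List.mem_toFinset, Finset.mem_compl, mem_toSet, not_lt]
      constructor
      · intro hv
        obtain ⟨a, ha, hav⟩ := List.mem_iff_getElem.mp hv
        have ha' : a < m + 1 := by rwa [hlent] at ha
        rw [List.getElem_take, hgetL] at hav
        show σ⁻¹ v ≤ σ⁻¹ (Fin.last n)
        rw [← hav, Equiv.Perm.inv_apply_self]
        show a ≤ m
        omega
      · intro hv
        have hv' : ((σ⁻¹ v : Fin (n + 1)) : ℕ) ≤ m := hv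
        rw [List.mem_iff_getElem]
        refine ⟨((σ⁻¹ v : Fin (n + 1)) : ℕ), by rw [hlent]; omega, ?_⟩
        rw [List.getElem_take, hgetL]
        exact Equiv.Perm.apply_inv_self σ v
    have hres := (List.toFinset_sort ((· ≤ ·) : Fin (n + 1) → Fin (n + 1) → Prop) hnd).mpr hsorted
    rw [htf] at hres
    exact hres.symm
  -- the descending part
  have hlend : (L.drop (m + 1)).length = n - m := by
    rw [List.length_drop, hlen]
    omega
  have hdrop : L.drop (m + 1) = ((toSet σ).sort (· ≤ ·)).reverse := by
    have hnd : ((L.drop (m + 1)).reverse).Nodup :=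
      List.nodup_reverse.mpr ((List.drop_sublist _ _).nodup hnodup)
    have hsorted : ((L.drop (m + 1)).reverse).Pairwise (· ≤ ·) := by
      rw [List.pairwise_reverse, List.pairwise_iff_get]
      intro a b hab
      have ha : (a : ℕ) < n - m := lt_of_lt_of_eq a.2 hlend
      have hb : (b : ℕ) < n - m := lt_of_lt_of_eq b.2 hlend
      simp only [List.get_eq_getElem, List.getElem_drop]
      rw [hgetL, hgetL]
      refine (h2 ?_ ?_ ?_).le
      · show m ≤ m + 1 + (a : ℕ)
        omega
      · show m ≤ m + 1 + (b : ℕ)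
        omega
      · show m + 1 + (a : ℕ) < m + 1 + (b : ℕ)
        have : (a : ℕ) < (b : ℕ) := hab
        omega
    have htf : ((L.drop (m + 1)).reverse).toFinset = toSet σ := by
      ext v
      simp only [List.toFinset_reverse, List.mem_toFinset, mem_toSet]
      constructor
      · intro hv
        obtain ⟨a, ha, hav⟩ := List.mem_iff_getElem.mp hv
        rw [List.getElem_drop, hgetL] at hav
        show m < ((σ⁻¹ v : Fin (n + 1)) : ℕ)
        rw [← hav, Equiv.Perm.inv_apply_self]
        show m < m + 1 + a
        omega
      · intro hv
        have hv' : m < ((σ⁻¹ v : Fin (n + 1)) : ℕ) := hv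
        have hvn : ((σ⁻¹ v : Fin (n + 1)) : ℕ) < n + 1 := (σ⁻¹ v).2
        rw [List.mem_iff_getElem]
        refine ⟨((σ⁻¹ v : Fin (n + 1)) : ℕ) - (m + 1), by rw [hlend]; omega, ?_⟩
        rw [List.getElem_drop, hgetL]
        have hidx : (⟨m + 1 + (((σ⁻¹ v : Fin (n + 1)) : ℕ) - (m + 1)), by omega⟩ : Fin (n + 1)) =
            σ⁻¹ v := by
          apply Fin.ext
          show m + 1 + (((σ⁻¹ v : Fin (n + 1)) : ℕ) - (m + 1)) = _
          omega
        rw [hidx]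
        exact Equiv.Perm.apply_inv_self σ v
    have hres := (List.toFinset_sort ((· ≤ ·) : Fin (n + 1) → Fin (n + 1) → Prop) hnd).mpr hsorted
    rw [htf] at hres
    rw [hres, List.reverse_reverse]
  calc L = L.take (m + 1) ++ L.drop (m + 1) := (List.take_append_drop _ _).symm
    _ = ulist (toSet σ) := by rw [htake, hdrop]; rfl

lemma uperm_toSet {σ : Equiv.Perm (Fin (n + 1))} (h : Unimodal σ) : uperm (toSet σ) = σ := by
  have hL : List.ofFn (uperm (toSet σ)) = List.ofFn σ := by
    rw [ofFn_uperm, ofFn_eq_ulist h]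
  have := List.ofFn_inj.mp hL
  exact Equiv.coe_fn_injective this

end Reconstruct

section Algebra

variable {n : ℕ}

lemma iterBracket_cons {A : Type*} [Ring A] (a : A) (l : List A) (hl : l ≠ []) :
    iterBracket (a :: l) = a * iterBracket l - iterBracket l * a := by
  cases l with
  | nil => exact absurd rfl hl
  | cons b t => rfl

lemma sort_map_succ (s : Finset (Fin (n + 1))) :
    ((s.map (Fin.succEmb (n + 1))).sort (· ≤ ·)) =
      (s.sort (· ≤ ·)).map (Fin.succEmb (n + 1)) := by
  refine (Multiset.map_sort _ _ _ _ ?_).symm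
  intro a _ b _
  simp [Fin.succ_le_succ_iff]

lemma zero_not_mem_map_succ (T : Finset (Fin (n + 1))) :
    (0 : Fin (n + 2)) ∉ T.map (Fin.succEmb (n + 1)) := by
  simp only [Finset.mem_map, Fin.coe_succEmb]
  rintro ⟨u, _, hu⟩
  exact Fin.succ_ne_zero u hu

lemma compl_map_succ (T : Finset (Fin (n + 1))) :
    (T.map (Fin.succEmb (n + 1)))ᶜ = insert 0 (Tᶜ.map (Fin.succEmb (n + 1))) := by
  ext v
  cases v using Fin.cases with
  | zero => simp [Finset.mem_compl, zero_not_mem_map_succ T]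
  | succ w =>
    have h1 : Fin.succ w ∈ T.map (Fin.succEmb (n + 1)) ↔ w ∈ T := Finset.mem_map' _
    have h2 : Fin.succ w ∈ Tᶜ.map (Fin.succEmb (n + 1)) ↔ w ∈ Tᶜ := Finset.mem_map' _
    simp [h1, h2, Finset.mem_compl, Fin.succ_ne_zero w]

lemma compl_insert_zero (T : Finset (Fin (n + 1))) :
    (insert (0 : Fin (n + 2)) (T.map (Fin.succEmb (n + 1))))ᶜ =
      Tᶜ.map (Fin.succEmb (n + 1)) := by
  rw [Finset.compl_insert, compl_map_succ, Finset.erase_insert (zero_not_mem_map_succ Tᶜ)]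

lemma erase_last_eq : (Finset.univ.erase (Fin.last (n + 1)) : Finset (Fin (n + 2))) =
    insert 0 ((Finset.univ.erase (Fin.last n)).map (Fin.succEmb (n + 1))) := by
  ext v
  cases v using Fin.cases with
  | zero =>
    simp only [Finset.mem_erase, Finset.mem_univ, and_true, Finset.mem_insert, true_or,
      iff_true]
    intro h
    have : (0 : ℕ) = n + 1 := congrArg Fin.val h
    omega
  | succ w =>
    have h1 : Fin.succ w ∈ (Finset.univ.erase (Fin.last n)).map (Fin.succEmb (n + 1)) ↔
        w ∈ Finset.univ.erase (Fin.last n) := Finset.mem_map' _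
    simp only [Finset.mem_erase, Finset.mem_univ, and_true, Finset.mem_insert, h1,
      Fin.succ_ne_zero w, false_or]
    constructor
    · intro hw hc
      exact hw (by rw [hc, Fin.succ_last])
    · intro hw hc
      exact hw (by rwa [← Fin.succ_last, Fin.succ_inj] at hc)

lemma bracket_sum {A : Type*} [Ring A] :
    ∀ (n : ℕ) (x : Fin (n + 1) → A),
      iterBracket (List.ofFn x) =
        ∑ S ∈ (Finset.univ.erase (Fin.last n)).powerset,
          ((-1 : A) ^ S.card) * ((ulist S).map x).prod := by
  intro n
  induction n with
  | zero =>
    intro x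
    have herase : (Finset.univ.erase (Fin.last 0) : Finset (Fin 1)) = ∅ := rfl
    have hulist : ulist (∅ : Finset (Fin 1)) = [0] := by
      have huniv : ((∅ : Finset (Fin 1)))ᶜ = {0} := rfl
      simp only [ulist, huniv, Finset.sort_empty, List.reverse_nil, List.append_nil,
        Finset.sort_singleton]
    rw [herase]
    simp only [Finset.powerset_empty, Finset.sum_singleton, Finset.card_empty, pow_zero,
      hulist, List.map_cons, List.map_nil, List.prod_cons, List.prod_nil, one_mul, mul_one]
    have : List.ofFn x = [x 0] := by
      rw [List.ofFn_succ]
      simp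
    rw [this]
    rfl
  | succ n ih =>
    intro x
    set y : Fin (n + 1) → A := fun i => x (Fin.succ i) with hy
    have hmapx : ∀ l : List (Fin (n + 1)), (l.map (Fin.succEmb (n + 1))).map x = l.map y := by
      intro l
      rw [List.map_map]
      rfl
    have hofn : List.ofFn x = x 0 :: List.ofFn y := by
      rw [List.ofFn_succ]
    have hne : List.ofFn y ≠ [] := by
      intro hcon
      have := congrArg List.length hcon
      simp at this
    rw [hofn, iterBracket_cons _ _ hne, ih y]
    rw [erase_last_eq, Finset.sum_powerset_insert (zero_not_mem_map_succ _)]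
    have hpow : ((Finset.univ.erase (Fin.last n)).map (Fin.succEmb (n + 1))).powerset =
        (Finset.univ.erase (Fin.last n)).powerset.image
          (fun T => T.map (Fin.succEmb (n + 1))) := by
      ext U
      simp only [Finset.mem_powerset, Finset.mem_image]
      rw [Finset.subset_map_iff]
      constructor
      · rintro ⟨u, hu, rfl⟩
        exact ⟨u, hu, rfl⟩
      · rintro ⟨u, hu, rfl⟩
        exact ⟨u, hu, rfl⟩
    have hinj : Function.Injective (fun T : Finset (Fin (n + 1)) =>
        T.map (Fin.succEmb (n + 1))) :=
      fun a b hab => Finset.map_injective _ hab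
    rw [hpow, Finset.sum_image (fun a _ b _ h => hinj h),
      Finset.sum_image (fun a _ b _ h => hinj h)]
    have hterm1 : ∀ T : Finset (Fin (n + 1)),
        ((-1 : A) ^ (T.map (Fin.succEmb (n + 1))).card) *
            ((ulist (T.map (Fin.succEmb (n + 1)))).map x).prod =
          ((-1 : A) ^ T.card) * (x 0 * ((ulist T).map y).prod) := by
      intro T
      have hul : (ulist (T.map (Fin.succEmb (n + 1)))).map x = x 0 :: (ulist T).map y := by
        rw [ulist, compl_map_succ,
          Finset.sort_insert _ (fun b _ => Fin.zero_le b) (zero_not_mem_map_succ Tᶜ),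
          sort_map_succ, sort_map_succ, ulist]
        simp only [List.cons_append, List.map_cons, List.map_append, List.map_reverse]
        rw [hmapx, hmapx]
      rw [hul, Finset.card_map, List.prod_cons]
    have hterm2 : ∀ T : Finset (Fin (n + 1)),
        ((-1 : A) ^ (insert (0 : Fin (n + 2)) (T.map (Fin.succEmb (n + 1)))).card) *
            ((ulist (insert (0 : Fin (n + 2)) (T.map (Fin.succEmb (n + 1))))).map x).prod =
          -(((-1 : A) ^ T.card) * (((ulist T).map y).prod * x 0)) := by
      intro T
      have hcard : (insert (0 : Fin (n + 2)) (T.map (Fin.succEmb (n + 1)))).card =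
          T.card + 1 := by
        rw [Finset.card_insert_of_notMem (zero_not_mem_map_succ T), Finset.card_map]
      have hul : (ulist (insert (0 : Fin (n + 2)) (T.map (Fin.succEmb (n + 1))))).map x =
          ((ulist T).map y) ++ [x 0] := by
        rw [ulist, compl_insert_zero,
          Finset.sort_insert _ (fun b _ => Fin.zero_le b) (zero_not_mem_map_succ T),
          sort_map_succ, sort_map_succ, ulist]
        simp only [List.reverse_cons, List.map_append, List.map_reverse, List.map_cons,
          List.map_nil]
        rw [hmapx, hmapx, List.append_assoc]
      rw [hcard, hul, List.prod_append, List.prod_singleton, pow_succ, mul_neg_one, neg_mul]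
    rw [Finset.sum_congr rfl (fun T _ => hterm1 T),
      Finset.sum_congr rfl (fun T _ => hterm2 T)]
    rw [Finset.sum_neg_distrib, Finset.mul_sum, Finset.sum_mul, sub_eq_add_neg]
    congr 1
    · refine Finset.sum_congr rfl fun T _ => ?_
      rw [← mul_assoc, ← ((Commute.neg_one_left (x 0)).pow_left T.card).eq, mul_assoc]
    · rw [neg_inj]
      exact Finset.sum_congr rfl fun T _ => (mul_assoc _ _ _)

end Algebra

open scoped Classical in
/-- The iterated bracket `[x₁,[x₂,[…,[x_(n-1),x_n]…]]]` equals
`Σ_{σ ∈ Uₙ} ν(σ) x_(σ(1)) ⋯ x_(σ(n))` with `ν(σ) = (-1)^(des σ)`. -/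
theorem iterBracket_eq_sum_unimodal {A : Type*} [Ring A] (n : ℕ) (hn : 1 ≤ n)
    (x : Fin n → A) :
    iterBracket (List.ofFn x) =
      ∑ σ : Equiv.Perm (Fin n),
        if Unimodal σ then
          ((-1 : A) ^ desNum σ) * (List.ofFn (fun i => x (σ i))).prod
        else 0 := by
  obtain ⟨m, rfl⟩ : ∃ m, n = m + 1 := ⟨n - 1, by omega⟩
  rw [← Finset.sum_filter, bracket_sum m x]
  symm
  have hlast : ∀ S ∈ (Finset.univ.erase (Fin.last m)).powerset, Fin.last m ∉ S := by
    intro S hS hmem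
    exact (Finset.mem_erase.mp ((Finset.mem_powerset.mp hS) hmem)).1 rfl
  refine Finset.sum_nbij' (i := toSet) (j := uperm) ?_ ?_ ?_ ?_ ?_
  · intro σ _
    exact Finset.mem_powerset.mpr
      (Finset.subset_erase.mpr ⟨Finset.subset_univ _, last_not_mem_toSet σ⟩)
  · intro S hS
    exact Finset.mem_filter.mpr ⟨Finset.mem_univ _, uperm_unimodal (hlast S hS)⟩
  · intro σ hσ
    exact uperm_toSet (Finset.mem_filter.mp hσ).2
  · intro S hS
    exact toSet_uperm (hlast S hS)
  · intro σ hσ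
    have hu := (Finset.mem_filter.mp hσ).2
    rw [desNum_unimodal hu, ← card_toSet]
    congr 1
    rw [← ofFn_eq_ulist hu, List.map_ofFn]
    rfl
end

section
/- Every permutation σ of {1,...,n} has at most 3 descent 'runs' if it is a product of two unimodal permutations; more precisely, if σ = τ·ρ with τ, ρ unimodal, then the descent composition of σ is of the form (n-r, 1^r) or (n-r-s-t, 1^t, s, 1^r). -/
theorem exists_forall_iff_le_of_succ_closed {P : ℕ → Prop} {p q : ℕ} (hpq : p ≤ q)
    (hP : ∀ i, p ≤ i → i + 1 < q → P i → P (i + 1)) :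
    ∃ c, p ≤ c ∧ c ≤ q ∧ ∀ i, p ≤ i → i < q → (P i ↔ c ≤ i) := by
  classical
  have hex : ∃ c, p ≤ c ∧ (q ≤ c ∨ P c) := ⟨q, hpq, Or.inl le_rfl⟩
  obtain ⟨hpc, hc⟩ := Nat.find_spec hex
  have hcq : Nat.find hex ≤ q := Nat.find_min' hex ⟨hpq, Or.inl le_rfl⟩
  refine ⟨Nat.find hex, hpc, hcq, fun i hpi hiq => ⟨fun hi => Nat.find_min' hex ⟨hpi, Or.inr hi⟩,
    fun hci => ?_⟩⟩
  induction i, hci using Nat.le_induction with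
  | base => exact hc.resolve_left (by omega)
  | succ i hci ih => exact hP i (by omega) hiq (ih (by omega) (by omega))

section Unimodal

variable {n : ℕ} {τ : Equiv.Perm (Fin n)}

theorem Unimodal.not_lt_and_lt (hτ : Unimodal τ) {x y z : Fin n} (hxy : x < y) (hyz : y < z) :
    ¬ (τ y < τ x ∧ τ y < τ z) := by
  obtain ⟨m, hmono, hanti⟩ := hτ
  rintro ⟨hx, hz⟩
  rcases le_total y m with hym | hmy
  · exact (hmono (hxy.le.trans hym : x ≤ m) hym hxy).asymm hx
  · exact (hanti hmy (hmy.trans hyz.le : m ≤ z) hyz).asymm hz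

theorem Unimodal.apply_lt_of_between (hτ : Unimodal τ) {x y z : Fin n}
    (hbtw : x < y ∧ y < z ∨ z < y ∧ y < x) (h : τ y < τ x) : τ z < τ y := by
  have hzy : z ≠ y := by rcases hbtw with ⟨-, h⟩ | ⟨h, -⟩ <;> [exact h.ne'; exact h.ne]
  refine (le_of_not_gt fun hyz => ?_).lt_of_ne (τ.injective.ne hzy)
  rcases hbtw with ⟨hxy, hyz'⟩ | ⟨hzy, hyx⟩
  · exact hτ.not_lt_and_lt hxy hyz' ⟨h, hyz⟩
  · exact hτ.not_lt_and_lt hzy hyx ⟨hyz, h⟩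

end Unimodal

def DescentAt {n : ℕ} (σ : Equiv.Perm (Fin n)) (i : ℕ) : Prop :=
  ∃ h : i + 1 < n, σ ⟨i + 1, h⟩ < σ ⟨i, Nat.lt_of_succ_lt h⟩

theorem mem_descents_iff {n : ℕ} (σ : Equiv.Perm (Fin n)) (i : Fin n) :
    i ∈ descents σ ↔ DescentAt σ i := by
  simp only [descents, Finset.mem_filter, Finset.mem_univ, true_and, DescentAt]
  constructor
  · rintro ⟨⟨j, hj⟩, rfl, hlt⟩
    exact ⟨hj, hlt⟩
  · rintro ⟨h, hlt⟩
    exact ⟨_, rfl, hlt⟩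

theorem DescentAt.succ_of_mul_unimodal {n : ℕ} {τ ρ : Equiv.Perm (Fin n)} (hτ : Unimodal τ)
    {m : Fin n} (hmono : StrictMonoOn ρ {i | i ≤ m}) (hanti : StrictAntiOn ρ {i | m ≤ i})
    {i : ℕ} (hi : i + 2 ≤ m ∨ m ≤ i) (hn : i + 2 < n) (h : DescentAt (τ * ρ) i) :
    DescentAt (τ * ρ) (i + 1) := by
  obtain ⟨h1, hd⟩ := h
  refine ⟨hn, hτ.apply_lt_of_between ?_ hd⟩
  rcases hi with hi | hi
  · refine Or.inl ⟨hmono ?_ ?_ ?_, hmono ?_ ?_ ?_⟩ <;>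
      simp only [Set.mem_ofPred_eq, Fin.le_def, Fin.lt_def] <;> omega
  · refine Or.inr ⟨hanti ?_ ?_ ?_, hanti ?_ ?_ ?_⟩ <;>
      simp only [Set.mem_ofPred_eq, Fin.le_def, Fin.lt_def] <;> omega

/-- If `σ = τ * ρ` with `τ, ρ` unimodal, then the descent set of `σ` is a union
of at most two intervals `[a,b) ∪ [c, n-1)`, the second one ending at the last
position; i.e. the descent composition of `σ` is of the form `(n-r, 1^r)` or
`(n-r-s-t, 1^t, s, 1^r)`. -/
theorem descents_of_prod_unimodal (n : ℕ) (σ τ ρ : Equiv.Perm (Fin n))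
    (hτ : Unimodal τ) (hρ : Unimodal ρ) (hσ : σ = τ * ρ) :
    ∃ a b c : ℕ, a ≤ b ∧ b ≤ c ∧
      ∀ i : Fin n, i ∈ descents σ ↔
        ((a ≤ (i : ℕ) ∧ (i : ℕ) < b) ∨ (c ≤ (i : ℕ) ∧ (i : ℕ) + 1 < n)) := by
  subst hσ
  obtain ⟨m, hmono, hanti⟩ := hρ
  have hm : (m : ℕ) < n := m.isLt
  obtain ⟨a, -, ham, ha⟩ := exists_forall_iff_le_of_succ_closed (P := DescentAt (τ * ρ))
    (Nat.zero_le m) fun i _ hi => DescentAt.succ_of_mul_unimodal hτ hmono hanti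
      (Or.inl (by omega)) (by omega)
  obtain ⟨c, hmc, -, hc⟩ := exists_forall_iff_le_of_succ_closed (P := DescentAt (τ * ρ))
    (q := n - 1) (by omega) fun i hmi hi => DescentAt.succ_of_mul_unimodal hτ hmono hanti
      (Or.inr hmi) (by omega)
  refine ⟨a, m, c, ham, hmc, fun i => ?_⟩
  rw [mem_descents_iff]
  rcases lt_or_ge (i : ℕ) m with him | hmi
  · rw [ha i (Nat.zero_le _) him]
    omega
  · by_cases hin : (i : ℕ) + 1 < n
    · rw [hc i hmi (by omega)]
      omega
    · exact iff_of_false (fun h => hin h.1) (by omega)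
end

section
/- Every unimodal permutation of {1,...,n} can be written as a product of two unimodal permutations in exactly n ways. -/
open Equiv Finset

def UnimodalAt {α β : Type*} [Preorder α] [Preorder β] (f : α → β) (m : α) : Prop :=
  StrictMonoOn f {i | i ≤ m} ∧ StrictAntiOn f {i | m ≤ i}

theorem Fin.mem_iff_of_ordConnected_of_isGreatest {n : ℕ} {K : Finset (Fin n)}
    (hK : (K : Set (Fin n)).OrdConnected) {p : Fin n} (hp : IsGreatest (K : Set (Fin n)) p)
    (q : Fin n) : q ∈ K ↔ (p : ℕ) + 1 ≤ q + #K ∧ q ≤ p := by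
  have hne : K.Nonempty := ⟨p, hp.1⟩
  have hl : K.min' hne ≤ p := K.min'_le p hp.1
  have hKIcc : K = Icc (K.min' hne) p := by
    ext q
    refine ⟨fun hq => mem_Icc.2 ⟨K.min'_le q hq, hp.2 hq⟩, fun hq => ?_⟩
    exact hK.out (K.min'_mem hne) hp.1 (mem_Icc.1 hq)
  rw [hKIcc, mem_Icc, Fin.card_Icc]
  omega

theorem StrictMonoOn.val_add_sub_le {n k : ℕ} {f : Fin n → Fin k} {m : Fin n}
    (hf : StrictMonoOn f {i | i ≤ m}) {i j : Fin n} (hij : i ≤ j) (hjm : j ≤ m) :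
    (f i : ℕ) + ((j : ℕ) - i) ≤ f j := by
  obtain ⟨d, hd⟩ : ∃ d, (j : ℕ) = i + d := ⟨j - i, by omega⟩
  induction d generalizing j with
  | zero => rw [show j = i by omega]; simp
  | succ d ih =>
    obtain ⟨j', hj'⟩ : ∃ j' : Fin n, (j' : ℕ) = i + d := ⟨⟨i + d, by omega⟩, rfl⟩
    have h₁ := ih (j := j') (by omega) (by omega) hj'
    have h₂ : f j' < f j := hf (show j' ≤ m by omega) hjm (show j' < j by omega)
    omega

theorem Equiv.Perm.card_filter_le_apply {n : ℕ} (σ : Perm (Fin n)) (c : Fin n) :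
    #{q | c ≤ σ q} = n - c := by
  rw [← Fin.card_Ici]
  exact card_equiv σ fun q => by simp

namespace UnimodalAt

section LinearOrder

variable {α β : Type*} [LinearOrder α] [Preorder β] {f : α → β} {m : α}

theorem apply_le_apply_peak (hf : UnimodalAt f m) (i : α) : f i ≤ f m := by
  rcases le_total i m with h | h
  · exact hf.1.monotoneOn h le_rfl h
  · exact hf.2.antitoneOn le_rfl h h

theorem le_of_apply_le_apply_of_peak_le (hf : UnimodalAt f m) {p q : α} (hmp : m ≤ p)
    (h : f p ≤ f q) : q ≤ p :=
  le_of_not_gt fun hpq => (hf.2 hmp (hmp.trans hpq.le) hpq).not_ge h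

theorem ordConnected_setOf_le_apply (hf : UnimodalAt f m) (c : β) :
    Set.OrdConnected {q | c ≤ f q} := by
  refine ⟨fun i hi k hk j ⟨hij, hjk⟩ => ?_⟩
  rcases le_total j m with hjm | hmj
  · exact le_trans hi (hf.1.monotoneOn (hij.trans hjm) hjm hij)
  · exact le_trans hk (hf.2.antitoneOn hmj (hmj.trans hjk) hjk)

end LinearOrder

theorem comp_rev {n : ℕ} {β : Type*} [Preorder β] {f : Fin n → β} {m : Fin n}
    (hf : UnimodalAt f m) : UnimodalAt (f ∘ Fin.rev) m.rev := by
  constructor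
  · intro i hi j hj hij
    exact hf.2 (Fin.le_rev_iff.1 hj) (Fin.le_rev_iff.1 hi) (Fin.rev_lt_rev.2 hij)
  · intro i hi j hj hij
    exact hf.1 (Fin.rev_le_iff.1 hj) (Fin.rev_le_iff.1 hi) (Fin.rev_lt_rev.2 hij)

variable {N : ℕ} {σ τ ρ : Perm (Fin (N + 1))} {m p : Fin (N + 1)}

theorem mul_revPerm (hσ : UnimodalAt σ m) :
    UnimodalAt ⇑(σ * Fin.revPerm : Perm (Fin (N + 1))) m.rev :=
  hσ.comp_rev

theorem apply_peak (hσ : UnimodalAt σ m) : σ m = Fin.last N := by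
  obtain ⟨i, hi⟩ := σ.surjective (Fin.last N)
  exact le_antisymm (Fin.le_last _) (hi ▸ hσ.apply_le_apply_peak i)

theorem le_apply_iff_of_isGreatest (hσ : UnimodalAt σ m) {c p : Fin (N + 1)}
    (hp : IsGreatest {q | c ≤ σ q} p) (q : Fin (N + 1)) :
    c ≤ σ q ↔ p + c ≤ q + N ∧ (q : ℕ) ≤ p := by
  have := Fin.mem_iff_of_ordConnected_of_isGreatest (K := {q | c ≤ σ q})
    (by simpa using hσ.ordConnected_setOf_le_apply c) (by simpa using hp) q
  rw [σ.card_filter_le_apply, mem_filter_univ] at this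
  rw [this]
  omega

theorem le_apply_iff_of_peak_le (hσ : UnimodalAt σ m) (hmp : m ≤ p) (q : Fin (N + 1)) :
    σ p ≤ σ q ↔ p + σ p ≤ q + N ∧ (q : ℕ) ≤ p :=
  hσ.le_apply_iff_of_isGreatest ⟨le_refl (σ p), fun _ => hσ.le_of_apply_le_apply_of_peak_le hmp⟩ q

theorem le_add_apply_of_peak_le (hσ : UnimodalAt σ m) (hmp : m ≤ p) : N ≤ p + σ p := by
  have hK : ({q | σ p ≤ σ q} : Finset _) ⊆ Iic p := fun q hq =>
    mem_Iic.2 (hσ.le_of_apply_le_apply_of_peak_le hmp (mem_filter_univ q |>.1 hq))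
  have := card_le_card hK
  rw [σ.card_filter_le_apply, Fin.card_Iic] at this
  omega

theorem le_apply_iff_of_le_apply_last (hτ : UnimodalAt τ m) {c : Fin (N + 1)}
    (hc : c ≤ τ (Fin.last N)) (v : Fin (N + 1)) : c ≤ τ v ↔ c ≤ v := by
  rw [hτ.le_apply_iff_of_isGreatest ⟨hc, fun v _ => Fin.le_last v⟩ v]
  simp only [Fin.val_last]
  omega

theorem apply_eq_self_of_lt_apply_last (hτ : UnimodalAt τ m) {v : Fin (N + 1)}
    (hv : v < τ (Fin.last N)) : τ v = v := by
  have h₁ := hτ.le_apply_iff_of_le_apply_last hv.le v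
  have h₂ := hτ.le_apply_iff_of_le_apply_last (c := ⟨v + 1, by omega⟩) hv v
  simp only [Fin.le_def] at h₁ h₂
  ext
  omega

variable (σ p) in
def rightFactorVal (q : Fin (N + 1)) : ℕ :=
  if p + σ p ≤ q + N ∧ (q : ℕ) ≤ p then q + N - p else σ q

theorem val_eq_rightFactorVal (hσ : UnimodalAt σ m) (hmp : m ≤ p) (hτ : Unimodal τ)
    (hρ : UnimodalAt ρ p) (h : τ * ρ = σ) (q : Fin (N + 1)) :
    (ρ q : ℕ) = rightFactorVal σ p q := by
  obtain ⟨mτ, hτ⟩ : ∃ mτ, UnimodalAt τ mτ := hτ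
  have hτρ (q : Fin (N + 1)) : τ (ρ q) = σ q := by rw [← h]; rfl
  have hlast : τ (Fin.last N) = σ p := by rw [← hρ.apply_peak, hτρ]
  have hlevel (q : Fin (N + 1)) : σ p ≤ σ q ↔ σ p ≤ ρ q := by
    rw [← hlast, ← hτρ q]
    exact hτ.le_apply_iff_of_le_apply_last le_rfl _
  have hU := hσ.le_apply_iff_of_peak_le hmp
  simp only [rightFactorVal, ← hU q]
  split_ifs with hq
  · -- `ρ` increases strictly on `[p + σ p - N, p]`, from at least `σ p` up to `N`
    obtain ⟨a, ha⟩ : ∃ a : Fin (N + 1), (a : ℕ) = p + σ p - N := ⟨⟨p + σ p - N, by omega⟩, rfl⟩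
    have := hU q
    have := hσ.le_add_apply_of_peak_le hmp
    have hρa := (hlevel a).1 ((hU a).2 (by omega))
    have h₁ := hρ.1.val_add_sub_le (i := a) (j := q) (by omega) (by omega)
    have h₂ := hρ.1.val_add_sub_le (i := q) (j := p) (by omega) le_rfl
    rw [hρ.apply_peak, Fin.val_last] at h₂
    omega
  · have hlt : ρ q < τ (Fin.last N) := hlast ▸ lt_of_not_ge (mt (hlevel q).2 hq)
    rw [← hτρ, hτ.apply_eq_self_of_lt_apply_last hlt]

theorem right_factor_unique_of_peak_le (hσ : UnimodalAt σ m) (hmp : m ≤ p)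
    {τ₁ τ₂ ρ₁ ρ₂ : Perm (Fin (N + 1))} (hτ₁ : Unimodal τ₁) (hρ₁ : UnimodalAt ρ₁ p)
    (h₁ : τ₁ * ρ₁ = σ) (hτ₂ : Unimodal τ₂) (hρ₂ : UnimodalAt ρ₂ p) (h₂ : τ₂ * ρ₂ = σ) :
    ρ₁ = ρ₂ := by
  ext q
  rw [hσ.val_eq_rightFactorVal hmp hτ₁ hρ₁ h₁, hσ.val_eq_rightFactorVal hmp hτ₂ hρ₂ h₂]

theorem exists_right_factor (hσ : UnimodalAt σ m) (hmp : m ≤ p) :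
    ∃ ρ : Perm (Fin (N + 1)), UnimodalAt ρ p ∧
      ∀ q, (ρ q : ℕ) = rightFactorVal σ p q := by
  have hU := hσ.le_apply_iff_of_peak_le hmp
  have hmU := hU m
  have hσm : (σ m : ℕ) = N := by simp [hσ.apply_peak]
  let f (q : Fin (N + 1)) : Fin (N + 1) :=
    ⟨rightFactorVal σ p q, by unfold rightFactorVal; split_ifs <;> omega⟩
  have hf (q : Fin (N + 1)) : (f q : ℕ) = rightFactorVal σ p q := rfl
  have hinj : Function.Injective f := by
    intro q q' hqq'
    have := hU q
    have := hU q'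
    have hval := congrArg Fin.val hqq'
    rw [hf, hf, rightFactorVal, rightFactorVal] at hval
    split_ifs at hval
    · omega
    · omega
    · omega
    · exact σ.injective (Fin.ext hval)
  refine ⟨Equiv.ofBijective f (Finite.injective_iff_bijective.1 hinj), ⟨?_, ?_⟩, hf⟩
  · intro i (hi : i ≤ p) j (hj : j ≤ p) hij
    rw [Fin.lt_def, Equiv.ofBijective_apply, Equiv.ofBijective_apply, hf, hf, rightFactorVal,
      rightFactorVal]
    have := hU i
    have := hU j
    by_cases hjU : p + σ p ≤ j + N
    · split_ifs <;> omega
    · have := hσ.1 (show i ≤ m by omega) (show j ≤ m by omega) hij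
      split_ifs <;> omega
  · intro i (hi : p ≤ i) j (hj : p ≤ j) hij
    rw [Fin.lt_def, Equiv.ofBijective_apply, Equiv.ofBijective_apply, hf, hf, rightFactorVal,
      rightFactorVal]
    have := hU i
    have := hU j
    have := hσ.2 (hmp.trans hi) (hmp.trans hj) hij
    split_ifs <;> omega

theorem unimodalAt_mul_inv (hσ : UnimodalAt σ m) (hmp : m ≤ p)
    (hρ : ∀ q, (ρ q : ℕ) = rightFactorVal σ p q) :
    UnimodalAt ⇑(σ * ρ⁻¹) ⟨m + N - p, by omega⟩ := by
  have hU := hσ.le_apply_iff_of_peak_le hmp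
  have hmU := hU m
  have hσm : (σ m : ℕ) = N := by simp [hσ.apply_peak]
  have hτρ (q : Fin (N + 1)) : (σ * ρ⁻¹) (ρ q) = σ q := by simp
  constructor
  · intro i hi j hj hij
    obtain ⟨i, rfl⟩ := ρ.surjective i
    obtain ⟨j, rfl⟩ := ρ.surjective j
    simp only [Set.mem_ofPred_eq, Fin.le_def, Fin.lt_def, hρ, rightFactorVal] at hi hj hij
    rw [hτρ, hτρ]
    have := hU i
    have := hU j
    by_cases hU' : (p + σ p ≤ i + N ∧ (i : ℕ) ≤ p) ∧ (p + σ p ≤ j + N ∧ (j : ℕ) ≤ p)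
    · simp only [if_pos hU'.1, if_pos hU'.2] at hij hj
      exact hσ.1 (show i ≤ m by omega) (show j ≤ m by omega) (show i < j by omega)
    · split_ifs at hij <;> omega
  · intro i hi j hj hij
    obtain ⟨i, rfl⟩ := ρ.surjective i
    obtain ⟨j, rfl⟩ := ρ.surjective j
    simp only [Set.mem_ofPred_eq, Fin.le_def, Fin.lt_def, hρ, rightFactorVal] at hi hj hij
    rw [hτρ, hτρ]
    have := hU i
    have := hU j
    have hiU : p + σ p ≤ i + N ∧ (i : ℕ) ≤ p := by split_ifs at hi <;> omega
    have hjU : p + σ p ≤ j + N ∧ (j : ℕ) ≤ p := by split_ifs at hj <;> omega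
    rw [if_pos hiU, if_pos hjU] at hij
    rw [if_pos hiU] at hi
    exact hσ.2 (show m ≤ i by omega) (show m ≤ j by omega) (show i < j by omega)

theorem exists_factorization_of_peak_le (hσ : UnimodalAt σ m) (hmp : m ≤ p) :
    ∃ τ ρ : Perm (Fin (N + 1)), Unimodal τ ∧ UnimodalAt ρ p ∧ τ * ρ = σ := by
  obtain ⟨ρ, hρ, hρval⟩ := hσ.exists_right_factor hmp
  exact ⟨σ * ρ⁻¹, ρ, ⟨_, hσ.unimodalAt_mul_inv hmp hρval⟩, hρ, inv_mul_cancel_right σ ρ⟩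

end UnimodalAt

namespace Unimodal

variable {N : ℕ} {σ : Perm (Fin (N + 1))}

theorem unimodalAt_inv_apply_last {ρ : Perm (Fin (N + 1))} (hρ : Unimodal ρ) :
    UnimodalAt ρ (ρ⁻¹ (Fin.last N)) := by
  obtain ⟨p, hp⟩ : ∃ p, UnimodalAt ρ p := hρ
  simpa [← hp.apply_peak] using hp

theorem right_factor_unique (hσ : Unimodal σ) {p : Fin (N + 1)}
    {τ₁ τ₂ ρ₁ ρ₂ : Perm (Fin (N + 1))} (hτ₁ : Unimodal τ₁) (hρ₁ : UnimodalAt ρ₁ p)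
    (h₁ : τ₁ * ρ₁ = σ) (hτ₂ : Unimodal τ₂) (hρ₂ : UnimodalAt ρ₂ p) (h₂ : τ₂ * ρ₂ = σ) :
    ρ₁ = ρ₂ := by
  obtain ⟨m, hσ⟩ : ∃ m, UnimodalAt σ m := hσ
  rcases le_total m p with hmp | hpm
  · exact hσ.right_factor_unique_of_peak_le hmp hτ₁ hρ₁ h₁ hτ₂ hρ₂ h₂
  · have := hσ.mul_revPerm.right_factor_unique_of_peak_le (Fin.rev_le_rev.2 hpm)
      hτ₁ hρ₁.mul_revPerm (by rw [← mul_assoc, h₁]) hτ₂ hρ₂.mul_revPerm (by rw [← mul_assoc, h₂])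
    exact mul_right_cancel this

theorem exists_factorization (hσ : Unimodal σ) (p : Fin (N + 1)) :
    ∃ τ ρ : Perm (Fin (N + 1)), Unimodal τ ∧ UnimodalAt ρ p ∧ τ * ρ = σ := by
  obtain ⟨m, hσ⟩ : ∃ m, UnimodalAt σ m := hσ
  rcases le_total m p with hmp | hpm
  · exact hσ.exists_factorization_of_peak_le hmp
  · obtain ⟨τ, ρ, hτ, hρ, h⟩ :=
      hσ.mul_revPerm.exists_factorization_of_peak_le (Fin.rev_le_rev.2 hpm)
    refine ⟨τ, ρ * Fin.revPerm, hτ, by simpa using hρ.mul_revPerm, ?_⟩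
    ext i
    simp [← mul_assoc, h]

end Unimodal

/-- Every unimodal permutation of `{1,…,n}` is a product of two unimodal
permutations in exactly `n` ways. -/
theorem card_unimodal_factorizations (n : ℕ) (hn : 1 ≤ n)
    (σ : Equiv.Perm (Fin n)) (hσ : Unimodal σ) :
    Nat.card {p : Equiv.Perm (Fin n) × Equiv.Perm (Fin n) //
      Unimodal p.1 ∧ Unimodal p.2 ∧ p.1 * p.2 = σ} = n := by
  obtain ⟨N, rfl⟩ : ∃ N, n = N + 1 := ⟨n - 1, by omega⟩
  refine (Nat.card_eq_of_bijective (fun x => x.1.2⁻¹ (Fin.last N)) ⟨?_, fun p => ?_⟩).trans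
    (Nat.card_fin _)
  · rintro ⟨⟨τ₁, ρ₁⟩, hτ₁, hρ₁, h₁⟩ ⟨⟨τ₂, ρ₂⟩, hτ₂, hρ₂, h₂⟩ (hpeak : ρ₁⁻¹ _ = ρ₂⁻¹ _)
    have hρ₁' := hρ₁.unimodalAt_inv_apply_last
    rw [hpeak] at hρ₁'
    obtain rfl := hσ.right_factor_unique hτ₁ hρ₁' h₁ hτ₂ hρ₂.unimodalAt_inv_apply_last h₂
    obtain rfl := mul_right_cancel (h₁.trans h₂.symm)
    rfl
  · obtain ⟨τ, ρ, hτ, hρ, h⟩ := hσ.exists_factorization p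
    exact ⟨⟨(τ, ρ), hτ, ⟨p, hρ⟩, h⟩, by simp [← hρ.apply_peak]⟩
end

section
/- For every n ≥ 2, Σ_{d | n, d odd} μ(d) · 2^(n/d) ≡ 0 (mod 2n), i.e. n divides Σ_{d|n, d odd} μ(d) 2^(n/d - 1). -/
open ArithmeticFunction Finset

/-- Fermat-type lemma: `p^k ∣ 2^(p^k * r) - 2^(p^(k-1) * r)` for prime `p`, `k ≥ 1`. -/
lemma aux_pow_sub_dvd (p : ℕ) (hp : p.Prime) (k r : ℕ) (hk : 1 ≤ k) :
    ((p : ℤ) ^ k) ∣ 2 ^ (p ^ k * r) - 2 ^ (p ^ (k - 1) * r) := by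
  haveI : Fact p.Prime := ⟨hp⟩
  have hfermat : ((p : ℤ)) ∣ 2 ^ (p * r) - 2 ^ r := by
    have : (((2 : ℤ) ^ (p * r) - 2 ^ r : ℤ) : ZMod p) = 0 := by
      push_cast
      rw [mul_comm p r, pow_mul]
      rw [ZMod.pow_card ((2 : ZMod p) ^ r)]
      ring
    exact (ZMod.intCast_zmod_eq_zero_iff_dvd _ p).mp this
  have h := dvd_sub_pow_of_dvd_sub hfermat (k - 1)
  have hk1 : k - 1 + 1 = k := by omega
  rw [hk1] at h
  have e1 : ((2 : ℤ) ^ (p * r)) ^ p ^ (k - 1) = 2 ^ (p ^ k * r) := by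
    rw [← pow_mul]
    congr 1
    have : p ^ k = p * p ^ (k - 1) := by
      conv_lhs => rw [← hk1]
      ring
    rw [this]; ring
  have e2 : ((2 : ℤ) ^ r) ^ p ^ (k - 1) = 2 ^ (p ^ (k - 1) * r) := by
    rw [← pow_mul, mul_comm]
  rwa [e1, e2] at h
  
/-- For `n ≥ 2`, `2n` divides `Σ_{d ∣ n, d odd} μ(d) 2^(n/d)`; equivalently,
`n` divides `Σ_{d ∣ n, d odd} μ(d) 2^(n/d - 1)`. -/
theorem moebius_sum_divisible (n : ℕ) (hn : 2 ≤ n) :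
    (2 * n : ℤ) ∣ ∑ d ∈ n.divisors.filter (fun d => Odd d),
      ArithmeticFunction.moebius d * 2 ^ (n / d) := by
  have hn0 : n ≠ 0 := by omega
  have h2n0 : 2 * n ≠ 0 := by omega
  set T : ℤ := ∑ d ∈ n.divisors.filter (fun d => Odd d),
      ArithmeticFunction.moebius d * 2 ^ (n / d) with hT
  -- key: every maximal prime power of 2n divides T
  have key : ∀ p ∈ (2 * n).primeFactors, ((p : ℤ) ^ ((2 * n).factorization p)) ∣ T := by
    intro p hp
    obtain ⟨hpp, hpdvd, -⟩ := Nat.mem_primeFactors.mp hp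
    by_cases hp2 : p = 2
    · -- p = 2 : divisibility termwise
      subst hp2
      set a := n.factorization 2 with ha
      have hv : (2 * n).factorization 2 = a + 1 := by
        rw [Nat.factorization_mul two_ne_zero hn0]
        simp [Nat.Prime.factorization Nat.prime_two, ha, add_comm]
      rw [hv]
      apply Finset.dvd_sum
      intro d hd
      rw [Finset.mem_filter, Nat.mem_divisors] at hd
      obtain ⟨⟨hdn, -⟩, hdodd⟩ := hd
      have hd0 : d ≠ 0 := fun h => by simp [h] at hdodd
      -- d divides the odd part of n
      have hd2 : ¬ 2 ∣ d := by
        have := Nat.odd_iff.mp hdodd; omega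
      have hcop : Nat.Coprime (2 ^ a) d :=
        Nat.Coprime.pow_left _ ((Nat.Prime.coprime_iff_not_dvd Nat.prime_two).mpr hd2)
      have hm := Nat.ordProj_mul_ordCompl_eq_self n 2
      have hdm : d ∣ ordCompl[2] n := by
        have : d ∣ 2 ^ a * ordCompl[2] n := by rw [hm]; exact hdn
        exact (Nat.Coprime.dvd_of_dvd_mul_left (hcop.symm) this)
      have hle : a + 1 ≤ n / d := by
        have h1 : n / d = 2 ^ a * (ordCompl[2] n / d) := by
          conv_lhs => rw [← hm]
          exact Nat.mul_div_assoc _ hdm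
        have h2 : 1 ≤ ordCompl[2] n / d :=
          Nat.div_pos (Nat.le_of_dvd (Nat.ordCompl_pos 2 hn0) hdm) (Nat.pos_of_ne_zero hd0)
        have h3 : a < 2 ^ a := Nat.lt_two_pow_self (n := a)
        calc a + 1 ≤ 2 ^ a := h3
          _ ≤ 2 ^ a * (ordCompl[2] n / d) := Nat.le_mul_of_pos_right _ h2
          _ = n / d := h1.symm
      exact Dvd.dvd.mul_left (pow_dvd_pow 2 hle) _
    · -- p odd prime
      have hpn : p ∣ n := by
        rcases (Nat.Prime.dvd_mul hpp).mp hpdvd with h | h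
        · exact absurd ((Nat.prime_dvd_prime_iff_eq hpp Nat.prime_two).mp h) hp2
        · exact h
      set k := n.factorization p with hkdef
      have hk1 : 1 ≤ k := (Nat.Prime.factorization_pos_of_dvd hpp hn0 hpn)
      have hv : (2 * n).factorization p = k := by
        rw [Nat.factorization_mul two_ne_zero hn0]
        simp [Nat.Prime.factorization Nat.prime_two, Finsupp.single_apply, Ne.symm hp2, hkdef]
      rw [hv]
      have hpodd : Odd p := hpp.odd_of_ne_two hp2
      set D := n.divisors.filter (fun d => Odd d) with hD
      -- split T over p ∣ d
      have hsplit : T = (∑ d ∈ D.filter (fun d => ¬ p ∣ d),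
            (moebius d : ℤ) * 2 ^ (n / d))
          + ∑ d ∈ D.filter (fun d => p ∣ d), (moebius d : ℤ) * 2 ^ (n / d) := by
        rw [hT, ← Finset.sum_filter_add_sum_filter_not D (fun d => p ∣ d)]
        ring
      -- the p ∣ d part reindexed
      have himg : ∑ d ∈ D.filter (fun d => p ∣ d), (moebius d : ℤ) * 2 ^ (n / d)
          = ∑ d ∈ D.filter (fun d => ¬ p ∣ d),
              (moebius (p * d) : ℤ) * 2 ^ (n / (p * d)) := by
        have hinj : ∀ x ∈ D.filter (fun d => ¬ p ∣ d), ∀ y ∈ D.filter (fun d => ¬ p ∣ d),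
            p * x = p * y → x = y := by
          intro x _ y _ h; exact Nat.eq_of_mul_eq_mul_left hpp.pos h
        rw [← Finset.sum_image (f := fun d => (moebius d : ℤ) * 2 ^ (n / d)) hinj]
        refine (Finset.sum_subset ?_ ?_).symm
        · intro x hx
          simp only [Finset.mem_image] at hx
          obtain ⟨d, hd, rfl⟩ := hx
          simp only [hD, Finset.mem_filter, Nat.mem_divisors] at hd ⊢
          obtain ⟨⟨⟨hdn, -⟩, hdodd⟩, hpd⟩ := hd
          have hcop : Nat.Coprime p d := (Nat.Prime.coprime_iff_not_dvd hpp).mpr hpd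
          refine ⟨⟨⟨Nat.Coprime.mul_dvd_of_dvd_of_dvd hcop hpn hdn, hn0⟩, hpodd.mul hdodd⟩,
            Dvd.intro d rfl⟩
        · intro x hx hnx
          simp only [hD, Finset.mem_filter, Nat.mem_divisors] at hx
          obtain ⟨⟨⟨hxn, -⟩, hxodd⟩, hpx⟩ := hx
          -- x not in image ⇒ p^2 ∣ x ⇒ μ x = 0
          have hps : p ∣ x / p := by
            by_contra hcon
            apply hnx
            simp only [Finset.mem_image]
            refine ⟨x / p, ?_, Nat.mul_div_cancel' hpx⟩
            simp only [hD, Finset.mem_filter, Nat.mem_divisors]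
            have hxpodd : Odd (x / p) := by
              rcases Nat.even_or_odd (x / p) with he | ho
              · exfalso
                have h2x : 2 ∣ x := dvd_trans he.two_dvd (Nat.div_dvd_of_dvd hpx)
                have := Nat.odd_iff.mp hxodd
                omega
              · exact ho
            exact ⟨⟨⟨dvd_trans (Nat.div_dvd_of_dvd hpx) hxn, hn0⟩, hxpodd⟩, hcon⟩
          have hsq : ¬ Squarefree x := by
            intro hsf
            have : p * p ∣ x := by
              obtain ⟨c, hc⟩ := hps
              exact ⟨c, by rw [mul_assoc, ← hc, Nat.mul_div_cancel' hpx]⟩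
            exact hpp.not_isUnit (hsf p this)
          rw [ArithmeticFunction.moebius_eq_zero_of_not_squarefree hsq]
          push_cast; ring
      -- combine termwise
      have hcomb : T = ∑ d ∈ D.filter (fun d => ¬ p ∣ d),
          (moebius d : ℤ) * (2 ^ (n / d) - 2 ^ (n / (p * d))) := by
        rw [hsplit, himg, ← Finset.sum_add_distrib]
        apply Finset.sum_congr rfl
        intro d hd
        simp only [hD, Finset.mem_filter, Nat.mem_divisors] at hd
        obtain ⟨⟨⟨hdn, -⟩, hdodd⟩, hpd⟩ := hd
        have hcop : Nat.Coprime p d := (Nat.Prime.coprime_iff_not_dvd hpp).mpr hpd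
        have hmu : moebius (p * d) = moebius p * moebius d :=
          ArithmeticFunction.isMultiplicative_moebius.map_mul_of_coprime hcop
        rw [hmu, ArithmeticFunction.moebius_apply_prime hpp]
        push_cast
        ring
      rw [hcomb]
      apply Finset.dvd_sum
      intro d hd
      simp only [hD, Finset.mem_filter, Nat.mem_divisors] at hd
      obtain ⟨⟨⟨hdn, -⟩, hdodd⟩, hpd⟩ := hd
      have hd0 : d ≠ 0 := fun h => by simp [h] at hdodd
      have hcop : Nat.Coprime p d := (Nat.Prime.coprime_iff_not_dvd hpp).mpr hpd
      have hcop' : Nat.Coprime (p ^ k) d := hcop.pow_left _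
      have hdpk : d * p ^ k ∣ n :=
        Nat.Coprime.mul_dvd_of_dvd_of_dvd (hcop'.symm) hdn (Nat.ordProj_dvd n p)
      obtain ⟨r, hr⟩ := hdpk
      have hnd : n / d = p ^ k * r := by
        rw [hr, mul_assoc, Nat.mul_div_cancel_left _ (Nat.pos_of_ne_zero hd0)]
      have hnpd : n / (p * d) = p ^ (k - 1) * r := by
        have hpk : p ^ k = p * p ^ (k - 1) := by
          conv_lhs => rw [show k = 1 + (k - 1) by omega]
          ring
        rw [hr, hpk]
        rw [show d * (p * p ^ (k - 1)) * r = (p * d) * (p ^ (k - 1) * r) by ring]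
        rw [Nat.mul_div_cancel_left _ (Nat.mul_pos hpp.pos (Nat.pos_of_ne_zero hd0))]
      rw [hnd, hnpd]
      exact Dvd.dvd.mul_left (aux_pow_sub_dvd p hpp k r hk1) _
  -- combine prime powers
  have hfact : ((2 * n : ℕ) : ℤ) =
      ∏ p ∈ (2 * n).primeFactors, (p : ℤ) ^ ((2 * n).factorization p) := by
    conv_lhs => rw [← Nat.factorization_prod_pow_eq_self h2n0]
    rw [Nat.prod_factorization_eq_prod_primeFactors]
    push_cast
    rfl
  have : ((2 * n : ℕ) : ℤ) ∣ T := by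
    rw [hfact]
    apply Finset.prod_dvd_of_coprime
    · intro p hp q hq hpq
      simp only [Function.onFun]
      obtain ⟨hpp, -, -⟩ := Nat.mem_primeFactors.mp hp
      obtain ⟨hqq, -, -⟩ := Nat.mem_primeFactors.mp hq
      have : Nat.Coprime (p ^ ((2 * n).factorization p)) (q ^ ((2 * n).factorization q)) :=
        Nat.Coprime.pow _ _ (((Nat.coprime_primes hpp hqq).mpr hpq))
      exact_mod_cast Nat.isCoprime_iff_coprime.mpr this
    · exact key
  exact_mod_cast this
end

section
/- The number of unimodal involutions of {1,...,n} (unimodal σ with σ² = id) has generating function 1 + 2 Σ_{n≥1} v_n t^n = ((1+t)/(1-t))·((1+t²)/(1-t²)), since c_1 = c_2 = 1. -/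
def fImpl (n : ℕ) (k : Fin n) (i : Fin n) : Fin n :=
  if h : i.val < k.val then i
  else ⟨n - 1 + k.val - i.val, by have := i.isLt; have := k.isLt; omega⟩

lemma fImpl_invol (n : ℕ) (k : Fin n) : Function.Involutive (fImpl n k) := by
  intro i
  have hi := i.isLt; have hk := k.isLt
  unfold fImpl
  split_ifs with h1 h2 <;> try rfl
  · simp at h2; omega
  · apply Fin.ext; simp; omega

def Fperm (n : ℕ) (k : Fin n) : Equiv.Perm (Fin n) := (fImpl_invol n k).toPerm

lemma Fperm_apply (n : ℕ) (k i : Fin n) : (Fperm n k i).val =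
    if i.val < k.val then i.val else n - 1 + k.val - i.val := by
  show (fImpl n k i).val = _
  unfold fImpl
  split_ifs <;> rfl

lemma Fperm_unimodal (n : ℕ) (k : Fin n) : Unimodal (Fperm n k) := by
  have hk := k.isLt
  refine ⟨k, ?_, ?_⟩
  · intro i hi j hj hij
    simp only [Set.mem_setOf_eq, Fin.le_def] at hi hj
    rw [Fin.lt_def] at hij ⊢
    rw [Fperm_apply, Fperm_apply]
    have hi' := i.isLt; have hj' := j.isLt
    split_ifs <;> omega
  · intro i hi j hj hij
    simp only [Set.mem_setOf_eq, Fin.le_def] at hi hj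
    rw [Fin.lt_def] at hij ⊢
    rw [Fperm_apply, Fperm_apply]
    have hi' := i.isLt; have hj' := j.isLt
    split_ifs <;> omega

lemma Fperm_mul_self (n : ℕ) (k : Fin n) : Fperm n k * Fperm n k = 1 := by
  ext i
  have : Fperm n k (Fperm n k i) = i := (fImpl_invol n k) i
  simp [this]

lemma mono_gap {n : ℕ} {f : Fin n → Fin n} {m : Fin n}
    (h : StrictMonoOn f {i | i ≤ m}) :
    ∀ t : ℕ, ∀ i j : Fin n, i.val = t → j ≤ i → i ≤ m →
      (f j).val + (i.val - j.val) ≤ (f i).val := by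
  intro t
  induction t with
  | zero =>
    intro i j hi hji him
    have : j = i := by rw [Fin.le_def] at hji; apply Fin.ext; omega
    subst this; simp
  | succ t ih =>
    intro i j hi hji him
    rw [Fin.le_def] at hji him
    by_cases hj : j = i
    · subst hj; simp
    · have hjlt : j.val < i.val := by
        rcases lt_or_eq_of_le hji with h' | h'
        · exact h'
        · exact absurd (Fin.ext h') hj
      obtain ⟨i', hvi'⟩ : ∃ i' : Fin n, i'.val = t := ⟨⟨t, by omega⟩, rfl⟩
      have hji' : j ≤ i' := by rw [Fin.le_def]; omega
      have him' : i' ≤ m := by rw [Fin.le_def]; omega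
      have h1 := ih i' j hvi' hji' him'
      have h2 : f i' < f i := h him' (by rw [Set.mem_setOf_eq, Fin.le_def]; omega)
          (by rw [Fin.lt_def]; omega)
      rw [Fin.lt_def] at h2
      omega

lemma anti_gap {n : ℕ} {f : Fin n → Fin n} {m : Fin n}
    (h : StrictAntiOn f {i | m ≤ i}) :
    ∀ t : ℕ, ∀ i j : Fin n, i.val = t → m ≤ j → j ≤ i →
      (f i).val + (i.val - j.val) ≤ (f j).val := by
  intro t
  induction t with
  | zero =>
    intro i j hi hmj hji
    have : j = i := by rw [Fin.le_def] at hji; apply Fin.ext; omega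
    subst this; simp
  | succ t ih =>
    intro i j hi hmj hji
    rw [Fin.le_def] at hji hmj
    by_cases hj : j = i
    · subst hj; simp
    · have hjlt : j.val < i.val := by
        rcases lt_or_eq_of_le hji with h' | h'
        · exact h'
        · exact absurd (Fin.ext h') hj
      obtain ⟨i', hvi'⟩ : ∃ i' : Fin n, i'.val = t := ⟨⟨t, by omega⟩, rfl⟩
      have hji' : j ≤ i' := by rw [Fin.le_def]; omega
      have hmi' : m ≤ i' := by rw [Fin.le_def]; omega
      have h1 := ih i' j hvi' (by rw [Fin.le_def]; omega) hji'
      have h2 : f i < f i' := h hmi' (by rw [Set.mem_setOf_eq, Fin.le_def]; omega)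
          (by rw [Fin.lt_def]; omega)
      rw [Fin.lt_def] at h2
      omega

lemma classify {n : ℕ} {σ : Equiv.Perm (Fin n)} (hu : Unimodal σ) (hinv : σ * σ = 1) :
    ∃ k : Fin n, σ = Fperm n k := by
  obtain ⟨m, hmono, hanti⟩ := hu
  have hn : 0 < n := m.pos
  have hσσ : ∀ i, σ (σ i) = i := by
    intro i
    have := congrArg (fun τ : Equiv.Perm (Fin n) => τ i) hinv
    simpa [Equiv.Perm.mul_apply] using this
  have hmax : ∀ i, (σ i).val ≤ (σ m).val := by
    intro i
    rcases le_or_gt i m with h | h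
    · have := mono_gap hmono m.val m i rfl h le_rfl
      omega
    · have := anti_gap hanti i.val i m rfl le_rfl h.le
      omega
  have hlast : (σ m).val = n - 1 := by
    have h1 := (σ.symm ⟨n - 1, by omega⟩).isLt
    have h2 : (σ (σ.symm ⟨n - 1, by omega⟩)).val = n - 1 := by
      rw [Equiv.apply_symm_apply]
    have := hmax (σ.symm ⟨n - 1, by omega⟩)
    have := (σ m).isLt
    omega
  have hlastval : (σ ⟨n - 1, by omega⟩).val = m.val := by
    have hml : m ≤ ⟨n - 1, by omega⟩ := by rw [Fin.le_def]; have := m.isLt; simp; omega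
    have : σ m = ⟨n - 1, by omega⟩ := by apply Fin.ext; simpa using hlast
    rw [← this, hσσ m]
  have htail : ∀ i, m ≤ i → (σ i).val = n - 1 + m.val - i.val := by
    intro i hmi
    have hi := i.isLt
    have h1 := anti_gap hanti i.val i m rfl le_rfl hmi
    have h2 := anti_gap hanti (n - 1) ⟨n - 1, by omega⟩ i rfl hmi
      (by rw [Fin.le_def]; simp; omega)
    simp [hlastval] at h2
    rw [Fin.le_def] at hmi
    omega
  have hheadlow : ∀ i : Fin n, i ≤ m → i.val ≤ (σ i).val := by
    intro i him
    have := mono_gap hmono i.val i ⟨0, by omega⟩ rfl (by rw [Fin.le_def]; simp) him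
    simp at this
    omega
  have hhead : ∀ i : Fin n, i < m → σ i = i := by
    intro i him
    rw [Fin.lt_def] at him
    have hi := i.isLt
    have hup : (σ i).val < m.val := by
      by_contra hge
      push_neg at hge
      have hσi := (σ i).isLt
      set i' : Fin n := ⟨n - 1 + m.val - (σ i).val, by omega⟩ with hi'
      have hmi' : m ≤ i' := by rw [Fin.le_def]; simp [hi']; omega
      have : (σ i').val = (σ i).val := by rw [htail i' hmi']; simp [hi']; omega
      have heq : σ i' = σ i := Fin.ext this
      have : i' = i := σ.injective heq
      have : i'.val = i.val := by rw [this]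
      simp [hi'] at this
      omega
    have h2 := hheadlow (σ i) (by rw [Fin.le_def]; omega)
    rw [hσσ i] at h2
    have h1 := hheadlow i (by rw [Fin.le_def]; omega)
    apply Fin.ext; omega
  refine ⟨m, ?_⟩
  ext i
  have hi := i.isLt
  have hm := m.isLt
  rw [Fperm_apply]
  rcases lt_or_ge i.val m.val with h | h
  · rw [hhead i (by rw [Fin.lt_def]; omega)]
    simp [h]
  · rw [htail i (by rw [Fin.le_def]; omega)]
    simp [Nat.not_lt.mpr h]

lemma card_eq (n : ℕ) :
    Nat.card {σ : Equiv.Perm (Fin n) // Unimodal σ ∧ σ * σ = 1} = n := by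
  have hb : Function.Bijective
      (fun k : Fin n => (⟨Fperm n k, Fperm_unimodal n k, Fperm_mul_self n k⟩ :
        {σ : Equiv.Perm (Fin n) // Unimodal σ ∧ σ * σ = 1})) := by
    constructor
    · intro k k' h
      have h' : Fperm n k = Fperm n k' := congrArg Subtype.val h
      have h1 := Fperm_apply n k k
      have h2 := Fperm_apply n k' k
      rw [h'] at h1
      have hk := k.isLt; have hk' := k'.isLt
      apply Fin.ext
      simp at h1
      split_ifs at h2 <;> omega
    · rintro ⟨σ, hu, hinv⟩
      obtain ⟨k, hk⟩ := classify hu hinv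
      exact ⟨k, by simp [hk]⟩
  rw [← Nat.card_eq_of_bijective _ hb, Nat.card_eq_fintype_card, Fintype.card_fin]

open PowerSeries in
lemma genfun_algebra :
    (PowerSeries.mk (fun n => if n = 0 then (1 : ℚ) else 2 * n)) =
      (((1 : PowerSeries ℚ) + X) * ((1 : PowerSeries ℚ) - X)⁻¹) *
        (((1 : PowerSeries ℚ) + X ^ 2) * ((1 : PowerSeries ℚ) - X ^ 2)⁻¹) := by
  have h1 : constantCoeff (1 - X : PowerSeries ℚ) ≠ 0 := by simp
  have h2 : constantCoeff (1 - X ^ 2 : PowerSeries ℚ) ≠ 0 := by simp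
  have hc : ((1 : PowerSeries ℚ) - X) * (1 - X ^ 2) ≠ 0 := by
    intro h
    rcases mul_eq_zero.mp h with h | h
    · exact h1 (by rw [h]; simp)
    · exact h2 (by rw [h]; simp)
  apply mul_right_cancel₀ hc
  have hr : (((1 : PowerSeries ℚ) + X) * ((1 : PowerSeries ℚ) - X)⁻¹) *
        (((1 : PowerSeries ℚ) + X ^ 2) * ((1 : PowerSeries ℚ) - X ^ 2)⁻¹) *
        (((1 : PowerSeries ℚ) - X) * (1 - X ^ 2)) = (1 + X) * (1 + X ^ 2) := by
    have e1 := PowerSeries.inv_mul_cancel (k := ℚ) (1 - X) h1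
    have e2 := PowerSeries.inv_mul_cancel (k := ℚ) (1 - X ^ 2) h2
    calc (((1 : PowerSeries ℚ) + X) * ((1 : PowerSeries ℚ) - X)⁻¹) *
        (((1 : PowerSeries ℚ) + X ^ 2) * ((1 : PowerSeries ℚ) - X ^ 2)⁻¹) *
        (((1 : PowerSeries ℚ) - X) * (1 - X ^ 2))
        = ((1 + X) * (1 + X ^ 2)) * (((1 - X)⁻¹ * (1 - X)) * ((1 - X ^ 2)⁻¹ * (1 - X ^ 2))) := by
          ring
      _ = (1 + X) * (1 + X ^ 2) := by rw [e1, e2]; ring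
  rw [hr]
  have hexp : ((1 : PowerSeries ℚ) - X) * (1 - X ^ 2) = 1 - X ^ 1 - X ^ 2 + X ^ 3 := by ring
  rw [hexp]
  have hlhs : (PowerSeries.mk (fun n => if n = 0 then (1 : ℚ) else 2 * n)) *
      ((1 : PowerSeries ℚ) - X ^ 1 - X ^ 2 + X ^ 3) =
      mk (fun n => if n = 0 then (1 : ℚ) else 2 * n)
      - mk (fun n => if n = 0 then (1 : ℚ) else 2 * n) * X ^ 1
      - mk (fun n => if n = 0 then (1 : ℚ) else 2 * n) * X ^ 2
      + mk (fun n => if n = 0 then (1 : ℚ) else 2 * n) * X ^ 3 := by ring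
  rw [hlhs]
  ext n
  simp only [map_add, map_sub, PowerSeries.coeff_mul_X_pow', PowerSeries.coeff_mk]
  rw [show ((1 : PowerSeries ℚ) + X) * (1 + X ^ 2) = 1 + X ^ 1 + X ^ 2 + X ^ 3 by ring]
  simp only [map_add, PowerSeries.coeff_one, PowerSeries.coeff_X_pow]
  rcases n with _ | _ | _ | _ | n <;> norm_num
  push_cast
  ring

open PowerSeries in
/-- The generating function of unimodal involutions:
`1 + 2 Σ_(n≥1) vₙ tⁿ = ((1+t)/(1-t)) ((1+t²)/(1-t²))`. -/
theorem unimodal_involutions_genfun :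
    PowerSeries.mk (fun n => if n = 0 then (1 : ℚ) else
        2 * Nat.card {σ : Equiv.Perm (Fin n) // Unimodal σ ∧ σ * σ = 1}) =
      (((1 : PowerSeries ℚ) + X) * ((1 : PowerSeries ℚ) - X)⁻¹) *
        (((1 : PowerSeries ℚ) + X ^ 2) * ((1 : PowerSeries ℚ) - X ^ 2)⁻¹) := by
  have : (fun n => if n = 0 then (1 : ℚ) else
      2 * Nat.card {σ : Equiv.Perm (Fin n) // Unimodal σ ∧ σ * σ = 1}) =
      (fun n : ℕ => if n = 0 then (1 : ℚ) else 2 * n) := by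
    funext n
    rw [card_eq]
  rw [this]
  exact genfun_algebra
end

section
/- For all d ≥ 1 and m ≥ 1 with n = dm, the scalar product ⟨p_n, h_m ∘ ℓ_d⟩ equals μ(d), where ℓ_d = (1/d) Σ_{j|d} μ(j) p_j^{d/j} is the Witt symmetric function, ∘ denotes plethysm, and ⟨·,·⟩ is the standard Hall scalar product on symmetric functions. -/
/-- Plethysm `g ∘ f` of symmetric functions written in power-sum coordinates:
the variable `X j` stands for `p_j`, and `p_j ∘ f` replaces each `p_k` in `f`
by `p_(jk)`. -/
noncomputable def pleth (g f : MvPolynomial ℕ ℚ) : MvPolynomial ℕ ℚ :=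
  MvPolynomial.aeval (fun j => MvPolynomial.rename (fun k => j * k) f) g

/-- `z_λ` for the monomial `∏ p_k^(a_k)`: `∏ k^(a_k) · a_k!`. -/
noncomputable def zMon (m : ℕ →₀ ℕ) : ℚ :=
  ∏ k ∈ m.support, (k : ℚ) ^ m k * (Nat.factorial (m k) : ℚ)

/-- The Hall scalar product in power-sum coordinates: `⟨p_λ, p_μ⟩ = δ_(λμ) z_λ`. -/
noncomputable def hall (f g : MvPolynomial ℕ ℚ) : ℚ :=
  ∑ m ∈ f.support, MvPolynomial.coeff m f * MvPolynomial.coeff m g * zMon m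

/-- `z_λ` of a partition. -/
noncomputable def zPart {m : ℕ} (lam : Nat.Partition m) : ℚ :=
  (lam.parts.map fun k => (k : ℚ)).prod *
    ∏ k ∈ lam.parts.toFinset, (Nat.factorial (lam.parts.count k) : ℚ)

/-- The complete homogeneous symmetric function `h_m = Σ_(λ ⊢ m) p_λ / z_λ`
in power-sum coordinates. -/
noncomputable def hComplete (m : ℕ) : MvPolynomial ℕ ℚ :=
  ∑ lam : Nat.Partition m, (zPart lam)⁻¹ • (lam.parts.map fun k => MvPolynomial.X k).prod

/-- The Witt symmetric function `ℓ_d = (1/d) Σ_{j ∣ d} μ(j) p_j^(d/j)`, written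
in the polynomial ring `ℚ[p₁, p₂, …]` where the variable `X j` stands for the
power sum `p_j`. -/
noncomputable def wittL (d : ℕ) : MvPolynomial ℕ ℚ :=
  (d : ℚ)⁻¹ • ∑ j ∈ d.divisors,
    (ArithmeticFunction.moebius j : ℚ) • (MvPolynomial.X j : MvPolynomial ℕ ℚ) ^ (d / j)

open MvPolynomial Finsupp

lemma constCoeff_rename_wittL (d : ℕ) (hd : 1 ≤ d) (φ : ℕ → ℕ) :
    constantCoeff (rename φ (wittL d)) = 0 := by
  rw [constantCoeff_rename]
  unfold wittL
  rw [constantCoeff_smul, map_sum]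
  have : ∀ j ∈ d.divisors,
      constantCoeff ((ArithmeticFunction.moebius j : ℚ) •
        (MvPolynomial.X j : MvPolynomial ℕ ℚ) ^ (d / j)) = 0 := by
    intro j hj
    have hj' : j ∣ d ∧ d ≠ 0 := Nat.mem_divisors.mp hj
    have hpos : 0 < d / j := Nat.div_pos (Nat.le_of_dvd (by omega) hj'.1)
      (Nat.pos_of_dvd_of_pos hj'.1 (by omega))
    rw [constantCoeff_smul, map_pow, constantCoeff_X, zero_pow (by omega), smul_zero]
  rw [Finset.sum_congr rfl this]
  simp

lemma coeff_single_mul_eq_zero (f g : MvPolynomial ℕ ℚ) (n : ℕ)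
    (hf : constantCoeff f = 0) (hg : constantCoeff g = 0) :
    coeff (Finsupp.single n 1) (f * g) = 0 := by
  rw [coeff_mul]
  apply Finset.sum_eq_zero
  intro p hp
  have h := Finset.HasAntidiagonal.mem_antidiagonal.mp hp
  have h1 : ∀ x, p.1 x + p.2 x = if n = x then 1 else 0 := by
    intro x
    rw [← Finsupp.single_apply (a := n) (b := 1) (a' := x), ← h]; rfl
  have hn := h1 n
  rw [if_pos rfl] at hn
  rcases Nat.le_one_iff_eq_zero_or_eq_one.mp (by omega : p.1 n ≤ 1) with h0 | h0
  · have : p.1 = 0 := by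
      ext x
      simp only [Finsupp.coe_zero, Pi.zero_apply]
      have := h1 x
      by_cases hx : n = x
      · subst hx; omega
      · rw [if_neg hx] at this; omega
    rw [this]
    have : coeff (0 : ℕ →₀ ℕ) f = 0 := hf
    rw [this, zero_mul]
  · have : p.2 = 0 := by
      ext x
      simp only [Finsupp.coe_zero, Pi.zero_apply]
      have := h1 x
      by_cases hx : n = x
      · subst hx; omega
      · rw [if_neg hx] at this; omega
    rw [this]
    have : coeff (0 : ℕ →₀ ℕ) g = 0 := hg
    rw [this, mul_zero]

lemma coeff_rename_wittL (d m : ℕ) (hd : 1 ≤ d) (hm : 1 ≤ m) :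
    coeff (Finsupp.single (d * m) 1) (rename (fun k => m * k) (wittL d)) =
      (ArithmeticFunction.moebius d : ℚ) / d := by
  unfold wittL
  rw [map_smul, map_sum, coeff_smul, coeff_sum]
  have : ∀ j ∈ d.divisors,
      coeff (Finsupp.single (d * m) 1)
        (rename (fun k => m * k)
          ((ArithmeticFunction.moebius j : ℚ) • (MvPolynomial.X j : MvPolynomial ℕ ℚ) ^ (d / j)))
      = if j = d then (ArithmeticFunction.moebius j : ℚ) else 0 := by
    intro j hj
    have hj' : j ∣ d ∧ d ≠ 0 := Nat.mem_divisors.mp hj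
    rw [map_smul, map_pow, rename_X, coeff_smul, X_pow_eq_monomial, coeff_monomial]
    by_cases hjd : j = d
    · subst hjd
      rw [if_pos rfl, Nat.div_self (by omega), if_pos (by rw [Nat.mul_comm]), smul_eq_mul,
        mul_one]
    · rw [if_neg hjd, if_neg, smul_zero]
      intro hcon
      rcases Finsupp.single_eq_single_iff _ _ _ _ |>.mp hcon with ⟨he, hv⟩ | ⟨hv, _⟩
      · have hjd' : j = d := by
          have h2 : m * j = m * d := by rw [he]; exact Nat.mul_comm d m
          exact Nat.eq_of_mul_eq_mul_left (by omega) h2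
        exact hjd hjd'
      · have hpos : 0 < d / j := Nat.div_pos (Nat.le_of_dvd (by omega) hj'.1)
          (Nat.pos_of_dvd_of_pos hj'.1 (by omega))
        omega
  rw [Finset.sum_congr rfl this, Finset.sum_ite_eq' d.divisors d
    (fun j => (ArithmeticFunction.moebius j : ℚ)),
    if_pos (Nat.mem_divisors_self d (by omega))]
  rw [smul_eq_mul]
  ring

/-- For `n = d·m`, the Hall scalar product `⟨p_n, h_m ∘ ℓ_d⟩` equals `μ(d)`. -/
theorem hall_pn_hm_pleth_wittL (d m : ℕ) (hd : 1 ≤ d) (hm : 1 ≤ m) :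
    hall (MvPolynomial.X (d * m)) (pleth (hComplete m) (wittL d)) =
      (ArithmeticFunction.moebius d : ℚ) := by
  have hdm : (1 : ℕ) ≤ d * m := Nat.one_le_iff_ne_zero.mpr (by positivity)
  -- hall reduces to coefficient extraction
  unfold hall
  rw [support_X, Finset.sum_singleton, coeff_X]
  have hz : zMon (Finsupp.single (d * m) 1) = (d * m : ℚ) := by
    unfold zMon
    rw [Finsupp.support_single_ne_zero _ one_ne_zero, Finset.prod_singleton,
      Finsupp.single_eq_same]
    simp
  rw [hz, if_pos rfl, one_mul]
  -- expand pleth (hComplete m) (wittL d)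
  have hpleth : pleth (hComplete m) (wittL d) =
      ∑ lam : Nat.Partition m, (zPart lam)⁻¹ •
        (lam.parts.map fun k => rename (fun k' => k * k') (wittL d)).prod := by
    unfold pleth hComplete
    rw [map_sum]
    congr 1
    ext lam
    rw [map_smul, map_multiset_prod, Multiset.map_map]
    congr 2
    ext k
    simp [Function.comp]
  rw [hpleth]
  rw [coeff_sum]
  -- only the indiscrete partition contributes
  rw [Finset.sum_eq_single (Nat.Partition.indiscrete m)]
  · -- main term
    rw [Nat.Partition.indiscrete_parts (by omega)]
    have hz2 : zPart (Nat.Partition.indiscrete m) = (m : ℚ) := by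
      unfold zPart
      rw [Nat.Partition.indiscrete_parts (by omega)]
      simp
    rw [hz2]
    have : ({m} : Multiset ℕ).map (fun k => rename (fun k' => k * k') (wittL d)) =
        {rename (fun k' => m * k') (wittL d)} := by simp
    rw [this, Multiset.prod_singleton, coeff_smul, smul_eq_mul,
      coeff_rename_wittL d m hd hm]
    have hd0 : (d : ℚ) ≠ 0 := by positivity
    have hm0 : (m : ℚ) ≠ 0 := by positivity
    field_simp
  · -- other partitions contribute zero
    intro lam _ hne
    rw [coeff_smul]
    convert smul_zero _
    -- analyse lam.parts
    have hsum : lam.parts.sum = m := lam.parts_sum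
    have hne0 : lam.parts ≠ 0 := by
      intro h0; rw [h0] at hsum; simp at hsum; omega
    obtain ⟨a, ha⟩ := Multiset.exists_mem_of_ne_zero hne0
    obtain ⟨t, ht⟩ := Multiset.exists_cons_of_mem ha
    rcases eq_or_ne t 0 with ht0 | ht0
    · -- single part: parts = {a}, a = m, so lam = indiscrete m, contradiction
      exfalso
      apply hne
      have : lam.parts = {m} := by
        rw [ht, ht0]
        have : a = m := by rw [ht, ht0] at hsum; simpa using hsum
        rw [this, Multiset.cons_zero]
      ext : 1
      rw [this, Nat.Partition.indiscrete_parts (by omega)]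
    · -- at least two parts
      obtain ⟨b, hb⟩ := Multiset.exists_mem_of_ne_zero ht0
      obtain ⟨u, hu⟩ := Multiset.exists_cons_of_mem hb
      rw [ht, hu, Multiset.map_cons, Multiset.map_cons, Multiset.prod_cons]
      apply coeff_single_mul_eq_zero
      · exact constCoeff_rename_wittL d hd _
      · rw [Multiset.prod_cons, map_mul, constCoeff_rename_wittL d hd _, zero_mul]
  · intro h
    exact absurd (Finset.mem_univ _) h
end
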